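/- arXiv:2403.18177 — 10 statements merged into one kernel-verified Lean document; each statement's English description precedes it below -/
import Mathlib

section
/- Let w ∈ (0,1), γ ∈ (0,1), x, y > 0, and set ℓ = x^w y^{1-w} and P = (w/(1-w))·(y/x). Suppose g : ℝ → ℝ is differentiable at 0 with g(0) = 0, y + γ·g(δ) > 0, and (x + δ)^w · (y + γ·g(δ))^{1-w} = ℓ for all δ in a neighborhood of 0. Then -g'(0) = P/γ. That is, the marginal exchange rate for buying asset X from the pool equals γ^{-1}·P. -/
open Real Set Filter

/-- **Marginal exchange rate for buying asset X from a G3M pool with fees.**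
Let `w, γ ∈ (0,1)`, reserves `x, y > 0`, liquidity `ℓ = x ^ w * y ^ (1-w)` and pool
price `P = (w/(1-w)) * (y/x)`.  If `g` is differentiable at `0` with `g 0 = 0` and,
for all `δ` in a neighborhood of `0`, `y + γ * g δ > 0` and the buy-side feasibility
equation `(x + δ) ^ w * (y + γ * g δ) ^ (1 - w) = ℓ` holds, then `-g'(0) = P / γ`. -/
theorem g3m_buy_marginal_rate
    (w γ x y ℓ P : ℝ)
    (hw : w ∈ Set.Ioo (0 : ℝ) 1) (hγ : γ ∈ Set.Ioo (0 : ℝ) 1)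
    (hx : 0 < x) (hy : 0 < y)
    (hℓ : ℓ = x ^ w * y ^ (1 - w))
    (hP : P = (w / (1 - w)) * (y / x))
    (g : ℝ → ℝ)
    (hg : DifferentiableAt ℝ g 0) (hg0 : g 0 = 0)
    (hfeas : ∀ᶠ δ in nhds (0 : ℝ),
      0 < y + γ * g δ ∧ (x + δ) ^ w * (y + γ * g δ) ^ (1 - w) = ℓ) :
    -deriv g 0 = P / γ := by
  obtain ⟨hw0, hw1⟩ := hw
  obtain ⟨hγ0, hγ1⟩ := hγ
  set g' := deriv g 0 with hg'
  have hgd : HasDerivAt g g' 0 := hg.hasDerivAt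
  -- derivative of first factor
  have h1 : HasDerivAt (fun δ : ℝ => (x + δ) ^ w) (1 * w * x ^ (w - 1)) 0 := by
    have : HasDerivAt (fun δ : ℝ => x + δ) 1 0 := (hasDerivAt_id 0).const_add x
    have := this.rpow_const (p := w) (Or.inl (by simpa using hx.ne'))
    simpa using this
  -- derivative of second factor
  have h2 : HasDerivAt (fun δ : ℝ => (y + γ * g δ) ^ (1 - w))
      ((γ * g') * (1 - w) * y ^ (1 - w - 1)) 0 := by
    have hin : HasDerivAt (fun δ : ℝ => y + γ * g δ) (γ * g') 0 :=
      ((hgd.const_mul γ).const_add y)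
    have := hin.rpow_const (p := 1 - w) (Or.inl (by simp [hg0]; exact hy.ne'))
    simpa [hg0] using this
  have hprod : HasDerivAt (fun δ : ℝ => (x + δ) ^ w * (y + γ * g δ) ^ (1 - w))
      ((1 * w * x ^ (w - 1)) * (y + γ * g 0) ^ (1 - w)
        + (x + 0) ^ w * ((γ * g') * (1 - w) * y ^ (1 - w - 1))) 0 := h1.mul h2
  have heq : (fun δ : ℝ => (x + δ) ^ w * (y + γ * g δ) ^ (1 - w)) =ᶠ[nhds (0:ℝ)]
      (fun _ => ℓ) := hfeas.mono fun δ h => h.2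
  have hconst : HasDerivAt (fun δ : ℝ => (x + δ) ^ w * (y + γ * g δ) ^ (1 - w)) 0 0 :=
    (hasDerivAt_const (0:ℝ) ℓ).congr_of_eventuallyEq heq
  have hD : (1 * w * x ^ (w - 1)) * (y + γ * g 0) ^ (1 - w)
      + (x + 0) ^ w * ((γ * g') * (1 - w) * y ^ (1 - w - 1)) = 0 :=
    hprod.unique hconst
  rw [hg0] at hD
  simp only [mul_zero, add_zero, one_mul] at hD
  have hxw : x ^ (w - 1) = x ^ w / x := Real.rpow_sub_one hx.ne' w
  have hyw : y ^ (1 - w - 1) = y ^ (1 - w) / y := Real.rpow_sub_one hy.ne' (1 - w)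
  rw [hxw, hyw] at hD
  have hxw0 : (0:ℝ) < x ^ w := Real.rpow_pos_of_pos hx w
  have hyw0 : (0:ℝ) < y ^ (1 - w) := Real.rpow_pos_of_pos hy (1 - w)
  have h1w : (0:ℝ) < 1 - w := by linarith
  rw [hP]
  field_simp at hD ⊢
  nlinarith [mul_pos hxw0 hyw0, sq_nonneg (x*y), hD]
end

section
/- Let w ∈ (0,1), γ ∈ (0,1), x, y > 0, and set ℓ = x^w y^{1-w} and P = (w/(1-w))·(y/x). Suppose g : ℝ → ℝ is differentiable at 0 with g(0) = 0, y + g(δ) > 0, and (x + γ·δ)^w · (y + g(δ))^{1-w} = ℓ for all δ in a neighborhood of 0. Then -g'(0) = γ·P. That is, the marginal exchange rate for selling asset X to the pool equals γ·P, so together with the buy side the fee creates a bid–ask spread [γP, γ^{-1}P]. -/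
open Real Set Filter

/-- **Marginal exchange rate for selling asset X to a G3M pool with fees.**
Let `w, γ ∈ (0,1)`, reserves `x, y > 0`, liquidity `ℓ = x ^ w * y ^ (1-w)` and pool
price `P = (w/(1-w)) * (y/x)`.  If `g` is differentiable at `0` with `g 0 = 0` and,
for all `δ` in a neighborhood of `0`, `y + g δ > 0` and the sell-side feasibility
equation `(x + γ * δ) ^ w * (y + g δ) ^ (1 - w) = ℓ` holds, then `-g'(0) = γ * P`. -/
theorem g3m_sell_marginal_rate
    (w γ x y ℓ P : ℝ)
    (hw : w ∈ Set.Ioo (0 : ℝ) 1) (hγ : γ ∈ Set.Ioo (0 : ℝ) 1)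
    (hx : 0 < x) (hy : 0 < y)
    (hℓ : ℓ = x ^ w * y ^ (1 - w))
    (hP : P = (w / (1 - w)) * (y / x))
    (g : ℝ → ℝ)
    (hg : DifferentiableAt ℝ g 0) (hg0 : g 0 = 0)
    (hfeas : ∀ᶠ δ in nhds (0 : ℝ),
      0 < y + g δ ∧ (x + γ * δ) ^ w * (y + g δ) ^ (1 - w) = ℓ) :
    -deriv g 0 = γ * P := by
  obtain ⟨hw0, hw1⟩ := hw
  obtain ⟨hγ0, hγ1⟩ := hγ
  have hℓpos : 0 < ℓ := by
    rw [hℓ]; positivity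
  -- eventually x + γδ > 0
  have hxpos : ∀ᶠ δ in nhds (0 : ℝ), 0 < x + γ * δ := by
    have : ContinuousAt (fun δ : ℝ => x + γ * δ) 0 := by fun_prop
    have h0 : (0:ℝ) < x + γ * 0 := by simpa using hx
    exact this.eventually (eventually_gt_nhds h0)
  set F : ℝ → ℝ := fun δ => w * Real.log (x + γ * δ) + (1 - w) * Real.log (y + g δ) with hF
  have hFeq : F =ᶠ[nhds (0:ℝ)] fun _ => Real.log ℓ := by
    filter_upwards [hfeas, hxpos] with δ ⟨hyg, heq⟩ hxg
    have := congrArg Real.log heq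
    rw [Real.log_mul (by positivity) (by positivity),
      Real.log_rpow hxg, Real.log_rpow hyg] at this
    simpa [hF] using this
  have hinner1 : HasDerivAt (fun δ : ℝ => x + γ * δ) γ 0 := by
    simpa using ((hasDerivAt_id (0:ℝ)).const_mul γ).const_add x
  have hlog1 : HasDerivAt (fun δ : ℝ => Real.log (x + γ * δ)) (γ / x) 0 := by
    have := hinner1.log (by positivity)
    simpa using this
  have hinner2 : HasDerivAt (fun δ : ℝ => y + g δ) (deriv g 0) 0 :=
    hg.hasDerivAt.const_add y
  have hlog2 : HasDerivAt (fun δ : ℝ => Real.log (y + g δ)) (deriv g 0 / y) 0 := by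
    have := hinner2.log (by simp [hg0]; exact hy.ne')
    simpa [hg0] using this
  have hFder : HasDerivAt F (w * (γ / x) + (1 - w) * (deriv g 0 / y)) 0 :=
    ((hlog1.const_mul w).add (hlog2.const_mul (1 - w)))
  have hzero : w * (γ / x) + (1 - w) * (deriv g 0 / y) = 0 := by
    have h1 : deriv F 0 = w * (γ / x) + (1 - w) * (deriv g 0 / y) := hFder.deriv
    have h2 : deriv F 0 = deriv (fun _ : ℝ => Real.log ℓ) 0 := hFeq.deriv_eq
    simp only [deriv_const] at h2
    rw [h2] at h1
    linarith
  have hw1' : (0:ℝ) < 1 - w := by linarith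
  rw [hP]
  field_simp at hzero ⊢
  nlinarith [hzero, hx.ne', hy.ne']
end

section
/- Let w ∈ (0,1), γ ∈ (0,1), x, y > 0, and let Δ_x^1, Δ_x^2 > 0 with Δ_x = Δ_x^1 + Δ_x^2. Define Δ_y, Δ_y^1, Δ_y^2 by the feasibility equations (x + γΔ_x)^w (y + Δ_y)^{1-w} = x^w y^{1-w}, (x + γΔ_x^1)^w (y + Δ_y^1)^{1-w} = x^w y^{1-w}, and (x + Δ_x^1 + γΔ_x^2)^w (y + Δ_y^1 + Δ_y^2)^{1-w} = (x + Δ_x^1)^w (y + Δ_y^1)^{1-w}, where y + Δ_y > 0, y + Δ_y^1 > 0 and y + Δ_y^1 + Δ_y^2 > 0. Then Δ_y < Δ_y^1 + Δ_y^2 < 0. That is, with fees the G3M is path dependent: splitting a sell order into two consecutive trades yields strictly more of asset Y than executing it in one trade. -/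
open Real Set

/-- **Path dependence of G3M trading with fees.**
Let `w, γ ∈ (0,1)` and reserves `x, y > 0`.  Selling `Δx = Δx₁ + Δx₂ > 0` of asset
`X` in a single trade yields `Δy` of asset `Y`, while performing the two trades
`Δx₁ > 0` and then `Δx₂ > 0` consecutively yields `Δy₁ + Δy₂`, where the amounts
are determined by the sell-side feasibility equations.  Then
`Δy < Δy₁ + Δy₂ < 0`: splitting a sell order yields strictly more of asset `Y`. -/
theorem g3m_path_dependence
    (w γ x y : ℝ)
    (hw : w ∈ Set.Ioo (0 : ℝ) 1) (hγ : γ ∈ Set.Ioo (0 : ℝ) 1)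
    (hx : 0 < x) (hy : 0 < y)
    (dx1 dx2 dy dy1 dy2 : ℝ)
    (hdx1 : 0 < dx1) (hdx2 : 0 < dx2)
    (hy0 : 0 < y + dy) (hy1 : 0 < y + dy1) (hy12 : 0 < y + dy1 + dy2)
    (heq : (x + γ * (dx1 + dx2)) ^ w * (y + dy) ^ (1 - w) = x ^ w * y ^ (1 - w))
    (heq1 : (x + γ * dx1) ^ w * (y + dy1) ^ (1 - w) = x ^ w * y ^ (1 - w))
    (heq2 : (x + dx1 + γ * dx2) ^ w * (y + dy1 + dy2) ^ (1 - w)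
      = (x + dx1) ^ w * (y + dy1) ^ (1 - w)) :
    dy < dy1 + dy2 ∧ dy1 + dy2 < 0 := by
  obtain ⟨hw0, hw1⟩ := hw
  obtain ⟨hγ0, hγ1⟩ := hγ
  have h1w : (0:ℝ) < 1 - w := by linarith
  set A : ℝ := x + γ * (dx1 + dx2) with hA
  set A1 : ℝ := x + γ * dx1 with hA1
  set A2 : ℝ := x + dx1 + γ * dx2 with hA2
  set B1 : ℝ := x + dx1 with hB1
  have hApos : 0 < A := by have := mul_pos hγ0 (add_pos hdx1 hdx2); positivity
  have hA1pos : 0 < A1 := by have := mul_pos hγ0 hdx1; positivity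
  have hA2pos : 0 < A2 := by have := mul_pos hγ0 hdx2; positivity
  have hB1pos : 0 < B1 := by positivity
  -- combined equation for the two-step trade
  have E : (A1 * A2) ^ w * (y + dy1 + dy2) ^ (1 - w) = (x * B1) ^ w * y ^ (1 - w) := by
    rw [Real.mul_rpow hA1pos.le hA2pos.le, Real.mul_rpow hx.le hB1pos.le]
    calc A1 ^ w * A2 ^ w * (y + dy1 + dy2) ^ (1 - w)
        = A1 ^ w * (A2 ^ w * (y + dy1 + dy2) ^ (1 - w)) := by ring
      _ = A1 ^ w * (B1 ^ w * (y + dy1) ^ (1 - w)) := by rw [heq2]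
      _ = B1 ^ w * (A1 ^ w * (y + dy1) ^ (1 - w)) := by ring
      _ = B1 ^ w * (x ^ w * y ^ (1 - w)) := by rw [heq1]
      _ = x ^ w * B1 ^ w * y ^ (1 - w) := by ring
  -- key algebraic inequalities
  have key1 : x * B1 < A1 * A2 := by
    rw [hA1, hA2, hB1]
    nlinarith [mul_pos hγ0 (mul_pos hx hdx1), mul_pos hγ0 (mul_pos hx hdx2),
      mul_pos hγ0 (mul_pos hdx1 hdx1), mul_pos (mul_pos hγ0 hγ0) (mul_pos hdx1 hdx2)]
  have key2 : A1 * A2 < A * B1 := by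
    rw [hA, hA1, hA2, hB1]
    nlinarith [mul_pos (mul_pos hγ0 (sub_pos.mpr hγ1)) (mul_pos hdx1 hdx2)]
  have hmono : ∀ u v : ℝ, 0 < u → 0 < v → u ^ (1-w) < v ^ (1-w) → u < v := by
    intro u v hu hv h
    by_contra hle
    exact absurd (Real.rpow_le_rpow hv.le (not_lt.mp hle) h1w.le) (not_le.mpr h)
  constructor
  · -- dy < dy1 + dy2
    have hpow : (A1 * A2) ^ w < (A * B1) ^ w :=
      Real.rpow_lt_rpow (by positivity) key2 hw0
    have h1 : A ^ w * ((A1 * A2) ^ w * (y + dy) ^ (1 - w))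
        < A ^ w * ((A1 * A2) ^ w * (y + dy1 + dy2) ^ (1 - w)) := by
      rw [E]
      have e0 : A ^ w * ((A1 * A2) ^ w * (y + dy) ^ (1 - w))
          = (A1 * A2) ^ w * (A ^ w * (y + dy) ^ (1 - w)) := by ring
      rw [e0, heq]
      have e1 : A ^ w * ((x * B1) ^ w * y ^ (1 - w))
          = (A * B1) ^ w * (x ^ w * y ^ (1 - w)) := by
        rw [Real.mul_rpow hx.le hB1pos.le, Real.mul_rpow hApos.le hB1pos.le]; ring
      rw [e1]
      exact mul_lt_mul_of_pos_right hpow (by positivity)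
    have h2 : (y + dy) ^ (1 - w) < (y + dy1 + dy2) ^ (1 - w) := by
      have hc : 0 < A ^ w * (A1 * A2) ^ w := by positivity
      have := (mul_lt_mul_iff_right₀ hc).mp (by
        calc A ^ w * (A1 * A2) ^ w * (y + dy) ^ (1 - w)
            = A ^ w * ((A1 * A2) ^ w * (y + dy) ^ (1 - w)) := by ring
          _ < A ^ w * ((A1 * A2) ^ w * (y + dy1 + dy2) ^ (1 - w)) := h1
          _ = A ^ w * (A1 * A2) ^ w * (y + dy1 + dy2) ^ (1 - w) := by ring)
      exact this
    have := hmono _ _ hy0 hy12 h2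
    linarith
  · -- dy1 + dy2 < 0
    have hpow : (x * B1) ^ w < (A1 * A2) ^ w :=
      Real.rpow_lt_rpow (by positivity) key1 hw0
    have h2 : (y + dy1 + dy2) ^ (1 - w) < y ^ (1 - w) := by
      have hc : 0 < (A1 * A2) ^ w := by positivity
      refine (mul_lt_mul_iff_right₀ hc).mp ?_
      rw [E]
      exact mul_lt_mul_of_pos_right hpow (by positivity)
    have := hmono _ _ hy12 hy h2
    linarith
end

section
/- Let w ∈ (0,1), γ ∈ (0,1), and let x, y : I → (0,∞) be differentiable functions on an interval I ⊆ ℝ satisfying the continuous buy-side trading relation w·(x'(t)/x(t)) + γ(1-w)·(y'(t)/y(t)) = 0 for all t ∈ I. Define the liquidity ℓ(t) = x(t)^w · y(t)^{1-w}. Then ℓ is differentiable and ℓ'(t)/ℓ(t) = (1-γ)(1-w)·(y'(t)/y(t)) ≥ 0 for all t ∈ I; in particular the pool liquidity is nondecreasing along buy trades. -/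
open Real Set

/-- **Liquidity growth along continuous buy-side G3M trading.**
Let `w, γ ∈ (0,1)` and let `x, y` be positive differentiable functions on an
interval `I` satisfying the continuous buy-side trading relation
`w * (x'/x) + γ*(1-w) * (y'/y) = 0` (with `y` nondecreasing: along buy trades
`dy ≥ 0`).  Then the liquidity `ℓ(t) = x(t) ^ w * y(t) ^ (1-w)` is
differentiable and `ℓ'(t)/ℓ(t) = (1-γ)*(1-w)*(y'(t)/y(t)) ≥ 0`; in particular
the pool liquidity is nondecreasing along buy trades. -/
theorem g3m_buy_side_liquidity_growth
    (w γ : ℝ) (hw : w ∈ Set.Ioo (0 : ℝ) 1) (hγ : γ ∈ Set.Ioo (0 : ℝ) 1)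
    (I : Set ℝ) (hI : Convex ℝ I)
    (x y x' y' : ℝ → ℝ)
    (hxpos : ∀ t ∈ I, 0 < x t) (hypos : ∀ t ∈ I, 0 < y t)
    (hx : ∀ t ∈ I, HasDerivAt x (x' t) t)
    (hy : ∀ t ∈ I, HasDerivAt y (y' t) t)
    (hbuy : ∀ t ∈ I, 0 ≤ y' t)
    (hrel : ∀ t ∈ I, w * (x' t / x t) + γ * (1 - w) * (y' t / y t) = 0) :
    ∀ t ∈ I, ∃ d : ℝ,
      HasDerivAt (fun τ => x τ ^ w * y τ ^ (1 - w)) d t ∧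
      d / (x t ^ w * y t ^ (1 - w)) = (1 - γ) * (1 - w) * (y' t / y t) ∧
      0 ≤ (1 - γ) * (1 - w) * (y' t / y t) := by
  rintro t ht
  have hxt := hxpos t ht
  have hyt := hypos t ht
  have hx0 : x t ≠ 0 := hxt.ne'
  have hy0 : y t ≠ 0 := hyt.ne'
  have hX : HasDerivAt (fun τ => x τ ^ w) (x' t * w * x t ^ (w - 1)) t :=
    (hx t ht).rpow_const (Or.inl hx0)
  have hY : HasDerivAt (fun τ => y τ ^ (1 - w)) (y' t * (1 - w) * y t ^ (1 - w - 1)) t :=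
    (hy t ht).rpow_const (Or.inl hy0)
  have hℓ : (0 : ℝ) < x t ^ w * y t ^ (1 - w) :=
    mul_pos (Real.rpow_pos_of_pos hxt w) (Real.rpow_pos_of_pos hyt _)
  refine ⟨_, hX.mul hY, ?_, ?_⟩
  · have h1 : x t ^ (w - 1) = x t ^ w / x t := by
      rw [Real.rpow_sub hxt, Real.rpow_one]
    have h2 : y t ^ (1 - w - 1) = y t ^ (1 - w) / y t := by
      rw [Real.rpow_sub hyt, Real.rpow_one]
    have key : x' t * w * x t ^ (w - 1) * y t ^ (1 - w) +
        x t ^ w * (y' t * (1 - w) * y t ^ (1 - w - 1)) =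
        (x t ^ w * y t ^ (1 - w)) * (w * (x' t / x t) + (1 - w) * (y' t / y t)) := by
      rw [h1, h2]; field_simp
    rw [key, mul_div_cancel_left₀ _ hℓ.ne']
    linear_combination hrel t ht
  · exact mul_nonneg (mul_nonneg (by linarith [hγ.2]) (by linarith [hw.2]))
      (div_nonneg (hbuy t ht) hyt.le)
end

section
/- Let w ∈ (0,1), γ ∈ (0,1), and let x, y : I → (0,∞) be differentiable functions on an interval I ⊆ ℝ satisfying the continuous sell-side trading relation γw·(x'(t)/x(t)) + (1-w)·(y'(t)/y(t)) = 0 for all t ∈ I. Then the quantity x(t)^{γw} · y(t)^{1-w} is constant on I, and the liquidity ℓ(t) = x(t)^w y(t)^{1-w} satisfies ℓ'(t)/ℓ(t) = (1 - 1/γ)(1-w)·(y'(t)/y(t)) ≥ 0. -/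
open Real Set

/-- **Invariant quantity and liquidity growth along continuous sell-side G3M trading.**
Let `w, γ ∈ (0,1)` and let `x, y` be positive differentiable functions on an
interval `I` satisfying the continuous sell-side trading relation
`γ*w * (x'/x) + (1-w) * (y'/y) = 0` (with `y` nonincreasing: along sell trades
`dy ≤ 0`).  Then `x(t) ^ (γ*w) * y(t) ^ (1-w)` is constant on `I`, and the
liquidity `ℓ(t) = x(t) ^ w * y(t) ^ (1-w)` satisfies
`ℓ'(t)/ℓ(t) = (1 - 1/γ)*(1-w)*(y'(t)/y(t)) ≥ 0`. -/
theorem g3m_sell_side_invariant_and_liquidity_growth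
    (w γ : ℝ) (hw : w ∈ Set.Ioo (0 : ℝ) 1) (hγ : γ ∈ Set.Ioo (0 : ℝ) 1)
    (I : Set ℝ) (hI : Convex ℝ I)
    (x y x' y' : ℝ → ℝ)
    (hxpos : ∀ t ∈ I, 0 < x t) (hypos : ∀ t ∈ I, 0 < y t)
    (hx : ∀ t ∈ I, HasDerivAt x (x' t) t)
    (hy : ∀ t ∈ I, HasDerivAt y (y' t) t)
    (hsell : ∀ t ∈ I, y' t ≤ 0)
    (hrel : ∀ t ∈ I, γ * w * (x' t / x t) + (1 - w) * (y' t / y t) = 0) :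
    (∀ t₁ ∈ I, ∀ t₂ ∈ I,
      x t₁ ^ (γ * w) * y t₁ ^ (1 - w) = x t₂ ^ (γ * w) * y t₂ ^ (1 - w)) ∧
    (∀ t ∈ I, ∃ d : ℝ,
      HasDerivAt (fun τ => x τ ^ w * y τ ^ (1 - w)) d t ∧
      d / (x t ^ w * y t ^ (1 - w)) = (1 - 1 / γ) * (1 - w) * (y' t / y t) ∧
      0 ≤ (1 - 1 / γ) * (1 - w) * (y' t / y t)) := by
  obtain ⟨hw0, hw1⟩ := hw
  obtain ⟨hγ0, hγ1⟩ := hγ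
  have key : ∀ a b : ℝ, ∀ t ∈ I,
      HasDerivAt (fun τ => x τ ^ a * y τ ^ b)
        ((x t ^ a * y t ^ b) * (a * (x' t / x t) + b * (y' t / y t))) t := by
    intro a b t ht
    have hxt := hxpos t ht
    have hyt := hypos t ht
    have h1 : HasDerivAt (fun τ => x τ ^ a) (x' t * a * x t ^ (a-1)) t :=
      (hx t ht).rpow_const (Or.inl hxt.ne')
    have h2 : HasDerivAt (fun τ => y τ ^ b) (y' t * b * y t ^ (b-1)) t :=
      (hy t ht).rpow_const (Or.inl hyt.ne')
    have h3 := h1.mul h2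
    refine HasDerivAt.congr_deriv h3 ?_
    have hx1 : x t ^ (a-1) = x t ^ a / x t := by
      rw [Real.rpow_sub hxt, Real.rpow_one]
    have hy1 : y t ^ (b-1) = y t ^ b / y t := by
      rw [Real.rpow_sub hyt, Real.rpow_one]
    rw [hx1, hy1]
    field_simp
  constructor
  · intro t₁ h₁ t₂ h₂
    have hderiv : ∀ t ∈ I, HasDerivWithinAt
        (fun τ => x τ ^ (γ*w) * y τ ^ (1-w)) ((fun _ : ℝ => (0:ℝ)) t) I t := by
      intro t ht
      have h := key (γ*w) (1-w) t ht
      rw [hrel t ht, mul_zero] at h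
      exact h.hasDerivWithinAt
    have hb := hI.norm_image_sub_le_of_norm_hasDerivWithin_le (C := 0) hderiv
      (fun t _ => by simp) h₂ h₁
    simp only [norm_zero, zero_mul] at hb
    have : x t₁ ^ (γ * w) * y t₁ ^ (1 - w) - (x t₂ ^ (γ * w) * y t₂ ^ (1 - w)) = 0 := by
      have := norm_le_zero_iff.mp hb
      simpa using this
    linarith
  · intro t ht
    have hxt := hxpos t ht
    have hyt := hypos t ht
    have hℓ : (0:ℝ) < x t ^ w * y t ^ (1-w) :=
      mul_pos (Real.rpow_pos_of_pos hxt w) (Real.rpow_pos_of_pos hyt _)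
    have hS : w * (x' t / x t) + (1-w) * (y' t / y t)
        = (1 - 1/γ) * (1-w) * (y' t / y t) := by
      have h := hrel t ht
      have h1 : γ * (1/γ) = 1 := mul_one_div_cancel hγ0.ne'
      apply mul_left_cancel₀ hγ0.ne'
      linear_combination h + ((1-w) * (y' t / y t)) * h1
    refine ⟨_, key w (1-w) t ht, ?_, ?_⟩
    · rw [mul_comm (x t ^ w * y t ^ (1-w)), mul_div_assoc, div_self hℓ.ne', mul_one, hS]
    · have h1 : (1 : ℝ) - 1/γ ≤ 0 := by
        have : (1:ℝ) ≤ 1/γ := by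
          rw [le_div_iff₀ hγ0]; linarith
        linarith
      have h2 : y' t / y t ≤ 0 := div_nonpos_of_nonpos_of_nonneg (hsell t ht) hyt.le
      have h3 : (1 - 1/γ) * (1-w) ≤ 0 := mul_nonpos_of_nonpos_of_nonneg h1 (by linarith)
      nlinarith [mul_nonneg (neg_nonneg.2 h3) (neg_nonneg.2 h2)]
end

section
/- Fix γ ∈ (0,1) and let c = -ln γ > 0. Let (s_i)_{i=0}^m be a real sequence (s_i = ln S_{τ_i}, the log reference price at the i-th arbitrage time) and let p_0 ∈ ℝ satisfy -c ≤ s_0 - p_0 ≤ c. Define recursively, for 1 ≤ i ≤ m: z_i^- = s_i - p_{i-1}, z_i = max(min(z_i^-, c), -c), p_i = s_i - z_i, and set z_0 = s_0 - p_0, J_i = z_i - z_i^- (with J_0 = 0), L_k = Σ_{i ≤ k} max(J_i, 0), U_k = Σ_{i ≤ k} max(-J_i, 0). Then for every 0 ≤ k ≤ m: (i) p_k = p_0 + U_k - L_k and z_k = s_k - p_0 + L_k - U_k; and (ii) L_k = max_{0 ≤ i ≤ k} max(0, -(c + s_i - p_0 - U_i)) and U_k = max_{0 ≤ i ≤ k}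 max(0, -(c - s_i + p_0 - L_i)). -/
open Real Set Finset

private lemma sup'_range_one_eq (f : ℕ → ℝ) :
    (Finset.range 1).sup' Finset.nonempty_range_add_one f = f 0 := by
  apply le_antisymm
  · apply Finset.sup'_le
    intro i hi
    have : i = 0 := by simpa using hi
    subst this; exact le_rfl
  · exact Finset.le_sup' f (by simp)

private lemma sup'_range_succ_eq (f : ℕ → ℝ) (n : ℕ) :
    (Finset.range (n + 1 + 1)).sup' Finset.nonempty_range_add_one f
      = f (n + 1) ⊔ (Finset.range (n + 1)).sup' Finset.nonempty_range_add_one f := by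
  apply le_antisymm
  · apply Finset.sup'_le
    intro i hi
    have hi' : i ≤ n + 1 := by simpa [Nat.lt_succ_iff] using hi
    rcases eq_or_lt_of_le hi' with h | h
    · subst h; exact le_sup_left
    · exact le_trans (Finset.le_sup' f (Finset.mem_range.mpr h)) le_sup_right
  · refine sup_le (Finset.le_sup' f (by simp)) (Finset.sup'_le _ _ fun i hi => ?_)
    exact Finset.le_sup' f (by simp at hi ⊢; omega)

/-- **Discrete mispricing dynamics (Proposition: discrete arbitrage).**
Fix `γ ∈ (0,1)` and `c = -ln γ`.  Given the log reference prices `s i` at the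
arbitrage times and the log pool prices `p i` determined by the discrete
arbitrage recursion — `z⁻ i = s i - p (i-1)`, `z i = max (min (z⁻ i) c) (-c)`,
`p i = s i - z i` — with jumps `J i = z i - z⁻ i` and regulators
`L k = ∑_{i ≤ k} (J i)⁺`, `U k = ∑_{i ≤ k} (J i)⁻`, we have for every `k ≤ m`:
(i) `p k = p 0 + U k - L k` and `z k = s k - p 0 + L k - U k`;
(ii) `L k = max_{0 ≤ i ≤ k} (0 ⊔ -(c + s i - p 0 - U i))` and
`U k = max_{0 ≤ i ≤ k} (0 ⊔ -(c - s i + p 0 - L i))`. -/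
theorem g3m_discrete_mispricing_dynamics
    (γ : ℝ) (hγ : γ ∈ Set.Ioo (0 : ℝ) 1) (c : ℝ) (hc : c = -Real.log γ)
    (m : ℕ) (s p zminus z J L U : ℕ → ℝ)
    (hinit : -c ≤ s 0 - p 0 ∧ s 0 - p 0 ≤ c)
    (hz0 : z 0 = s 0 - p 0) (hJ0 : J 0 = 0)
    (hzminus : ∀ i, 1 ≤ i → i ≤ m → zminus i = s i - p (i - 1))
    (hz : ∀ i, 1 ≤ i → i ≤ m → z i = max (min (zminus i) c) (-c))
    (hp : ∀ i, 1 ≤ i → i ≤ m → p i = s i - z i)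
    (hJ : ∀ i, 1 ≤ i → i ≤ m → J i = z i - zminus i)
    (hL : ∀ k, k ≤ m → L k = ∑ i ∈ Finset.range (k + 1), max (J i) 0)
    (hU : ∀ k, k ≤ m → U k = ∑ i ∈ Finset.range (k + 1), max (-J i) 0) :
    ∀ k ≤ m,
      (p k = p 0 + U k - L k ∧ z k = s k - p 0 + L k - U k) ∧
      L k = (Finset.range (k + 1)).sup' Finset.nonempty_range_add_one
        (fun i => max 0 (-(c + s i - p 0 - U i))) ∧
      U k = (Finset.range (k + 1)).sup' Finset.nonempty_range_add_one
        (fun i => max 0 (-(c - s i + p 0 - L i))) := by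

  obtain ⟨hγ0, hγ1⟩ := hγ
  have hc0 : 0 < c := by
    rw [hc]; linarith [Real.log_neg hγ0 hγ1]
  have hL0 : L 0 = 0 := by
    rw [hL 0 (Nat.zero_le m)]; simp [hJ0]
  have hU0 : U 0 = 0 := by
    rw [hU 0 (Nat.zero_le m)]; simp [hJ0]
  have hLstep : ∀ k, k + 1 ≤ m → L (k + 1) = L k + max (J (k + 1)) 0 := by
    intro k hk
    rw [hL (k + 1) hk, hL k (by omega), Finset.sum_range_succ]
  have hUstep : ∀ k, k + 1 ≤ m → U (k + 1) = U k + max (-J (k + 1)) 0 := by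
    intro k hk
    rw [hU (k + 1) hk, hU k (by omega), Finset.sum_range_succ]
  have hzb : ∀ k, k ≤ m → -c ≤ z k ∧ z k ≤ c := by
    intro k hk
    rcases Nat.eq_zero_or_pos k with h0 | h1
    · subst h0; rw [hz0]; exact hinit
    · rw [hz k h1 hk]
      refine ⟨le_max_right _ _, max_le (le_trans (min_le_right _ _) le_rfl) ?_⟩
      linarith
  have hLnn : ∀ k, k ≤ m → 0 ≤ L k := by
    intro k hk
    rw [hL k hk]
    exact Finset.sum_nonneg fun i _ => le_max_right _ _
  have hUnn : ∀ k, k ≤ m → 0 ≤ U k := by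
    intro k hk
    rw [hU k hk]
    exact Finset.sum_nonneg fun i _ => le_max_right _ _
  have hJpos : ∀ i, 1 ≤ i → i ≤ m → 0 < J i → z i = -c := by
    intro i h1 him hJi
    have hzv := hz i h1 him
    have hJv := hJ i h1 him
    by_cases h : -c ≤ zminus i
    · exfalso
      have : z i ≤ zminus i := by
        rw [hzv]; exact max_le (min_le_left _ _) h
      linarith
    · push_neg at h
      rw [hzv, min_eq_left (by linarith), max_eq_right (le_of_lt h)]
  have hJneg : ∀ i, 1 ≤ i → i ≤ m → J i < 0 → z i = c := by
    intro i h1 him hJi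
    have hzv := hz i h1 him
    have hJv := hJ i h1 him
    by_cases h : zminus i ≤ c
    · exfalso
      have : zminus i ≤ z i := by
        rw [hzv]; exact le_trans (le_min le_rfl h) (le_max_left _ _)
      linarith
    · push_neg at h
      rw [hzv, min_eq_right (le_of_lt h), max_eq_left (by linarith)]
  have part1 : ∀ k, k ≤ m → p k = p 0 + U k - L k := by
    intro k
    induction k with
    | zero => intro _; rw [hL0, hU0]; ring
    | succ n ih =>
      intro hk
      have hn : n ≤ m := by omega
      have h1 : 1 ≤ n + 1 := by omega
      have hzm := hzminus (n + 1) h1 hk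
      simp only [Nat.add_sub_cancel] at hzm
      have hpv := hp (n + 1) h1 hk
      have hJv := hJ (n + 1) h1 hk
      have hLs := hLstep n hk
      have hUs := hUstep n hk
      have ihv := ih hn
      have hJid : max (J (n + 1)) 0 - max (-J (n + 1)) 0 = J (n + 1) := by
        rcases le_total (J (n + 1)) 0 with h | h
        · rw [max_eq_right h, max_eq_left (by linarith)]; ring
        · rw [max_eq_left h, max_eq_right (by linarith)]; ring
      linarith
  have part1z : ∀ k, k ≤ m → z k = s k - p 0 + L k - U k := by
    intro k hk
    rcases Nat.eq_zero_or_pos k with h0 | h1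
    · subst h0; rw [hz0, hL0, hU0]; ring
    · have hpv := hp k h1 hk
      have := part1 k hk
      linarith
  have part2L : ∀ k, k ≤ m →
      L k = (Finset.range (k + 1)).sup' Finset.nonempty_range_add_one
        (fun i => max 0 (-(c + s i - p 0 - U i))) := by
    intro k
    induction k with
    | zero =>
      intro _
      rw [sup'_range_one_eq]
      show L 0 = max 0 (-(c + s 0 - p 0 - U 0))
      have key : -(c + s 0 - p 0 - U 0) = -(c + z 0) := by
        rw [hz0, hU0]; ring
      rw [key, hL0, max_eq_left (by linarith [hinit.1])]
    | succ n ih =>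
      intro hk
      have hn : n ≤ m := by omega
      have h1 : 1 ≤ n + 1 := by omega
      rw [sup'_range_succ_eq, ← ih hn]
      have key : -(c + s (n + 1) - p 0 - U (n + 1)) = L (n + 1) - (c + z (n + 1)) := by
        have := part1z (n + 1) hk
        linarith
      have hLs := hLstep n hk
      have hzbk := hzb (n + 1) hk
      show L (n + 1) = max 0 (-(c + s (n + 1) - p 0 - U (n + 1))) ⊔ L n
      rw [key]
      rcases lt_or_ge 0 (J (n + 1)) with hpos | hnp
      · have hzc : z (n + 1) = -c := hJpos (n + 1) h1 hk hpos
        have hLn1 : L (n + 1) = L n + J (n + 1) := by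
          rw [hLs, max_eq_left (le_of_lt hpos)]
        rw [hzc]
        have : L (n + 1) - (c + -c) = L (n + 1) := by ring
        rw [this, max_eq_right (hLnn (n + 1) hk)]
        exact (sup_eq_left.mpr (by linarith)).symm
      · have hLn1 : L (n + 1) = L n := by
          rw [hLs, max_eq_right hnp]; ring
        rw [hLn1]
        refine (sup_eq_right.mpr (max_le (hLnn n hn) ?_)).symm
        linarith [hzbk.1]
  have part2U : ∀ k, k ≤ m →
      U k = (Finset.range (k + 1)).sup' Finset.nonempty_range_add_one
        (fun i => max 0 (-(c - s i + p 0 - L i))) := by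
    intro k
    induction k with
    | zero =>
      intro _
      rw [sup'_range_one_eq]
      show U 0 = max 0 (-(c - s 0 + p 0 - L 0))
      have key : -(c - s 0 + p 0 - L 0) = -(c - z 0) := by
        rw [hz0, hL0]; ring
      rw [key, hU0, max_eq_left (by linarith [hinit.2])]
    | succ n ih =>
      intro hk
      have hn : n ≤ m := by omega
      have h1 : 1 ≤ n + 1 := by omega
      rw [sup'_range_succ_eq, ← ih hn]
      have key : -(c - s (n + 1) + p 0 - L (n + 1)) = U (n + 1) - (c - z (n + 1)) := by
        have := part1z (n + 1) hk
        linarith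
      have hUs := hUstep n hk
      have hzbk := hzb (n + 1) hk
      show U (n + 1) = max 0 (-(c - s (n + 1) + p 0 - L (n + 1))) ⊔ U n
      rw [key]
      rcases lt_or_ge (J (n + 1)) 0 with hneg | hnn
      · have hzc : z (n + 1) = c := hJneg (n + 1) h1 hk hneg
        have hUn1 : U (n + 1) = U n + -J (n + 1) := by
          rw [hUs, max_eq_left (by linarith)]
        rw [hzc]
        have : U (n + 1) - (c - c) = U (n + 1) := by ring
        rw [this, max_eq_right (hUnn (n + 1) hk)]
        exact (sup_eq_left.mpr (by linarith)).symm
      · have hUn1 : U (n + 1) = U n := by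
          rw [hUs, max_eq_right (by linarith)]; ring
        rw [hUn1]
        refine (sup_eq_right.mpr (max_le (hUnn n hn) ?_)).symm
        linarith [hzbk.2]
  intro k hk
  exact ⟨⟨part1 k hk, part1z k hk⟩, part2L k hk, part2U k hk⟩
end

section
/- Let c > 0 and let s : [0,∞) → ℝ be continuous with s(0) ∈ [-c, c]. Then there exist continuous nondecreasing functions L, U : [0,∞) → ℝ with L(0) = U(0) = 0 such that the function Z(t) = s(t) + L(t) - U(t) satisfies: (a) Z(t) ∈ [-c, c] for all t ≥ 0; (b) L increases only when Z = -c and U increases only when Z = c, i.e. for all 0 ≤ t_1 ≤ t_2, if Z(t) > -c for all t ∈ [t_1, t_2] then L(t_1) = L(t_2), and if Z(t) < c for all t ∈ [t_1, t_2] then U(t_1) = U(t_2). -/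
open Real Set

lemma runSup_bddAbove {g : ℝ → ℝ} {a b t : ℝ}
    (hg : ContinuousOn g (Icc a b)) (ht : t ∈ Icc a b) :
    BddAbove (g '' Icc a t) :=
  IsCompact.bddAbove_image isCompact_Icc
    (hg.mono (Icc_subset_Icc le_rfl ht.2))

lemma runSup_ge {g : ℝ → ℝ} {a b t : ℝ}
    (hg : ContinuousOn g (Icc a b)) (ht : t ∈ Icc a b) :
    g t ≤ sSup (g '' Icc a t) :=
  le_csSup (runSup_bddAbove hg ht) (mem_image_of_mem g ⟨ht.1, le_rfl⟩)

lemma runSup_mono {g : ℝ → ℝ} {a b t t' : ℝ}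
    (hg : ContinuousOn g (Icc a b)) (ht : t ∈ Icc a b) (ht' : t' ∈ Icc a b) (h : t ≤ t') :
    sSup (g '' Icc a t) ≤ sSup (g '' Icc a t') :=
  csSup_le_csSup (runSup_bddAbove hg ht')
    ((nonempty_Icc.2 ht.1).image g)
    (image_mono (Icc_subset_Icc le_rfl h))

lemma runSup_split {g : ℝ → ℝ} {a b t t' : ℝ}
    (hg : ContinuousOn g (Icc a b)) (ht : t ∈ Icc a b) (ht' : t' ∈ Icc a b) (h : t ≤ t') :
    sSup (g '' Icc a t') = max (sSup (g '' Icc a t)) (sSup (g '' Icc t t')) := by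
  rw [← Icc_union_Icc_eq_Icc ht.1 h, image_union]
  exact csSup_union (runSup_bddAbove hg ht) ((nonempty_Icc.2 ht.1).image g)
    (IsCompact.bddAbove_image isCompact_Icc (hg.mono (Icc_subset_Icc ht.1 ht'.2)))
    ((nonempty_Icc.2 h).image g)

lemma runSup_cont {g : ℝ → ℝ} {a b : ℝ} (hab : a ≤ b)
    (hg : ContinuousOn g (Icc a b)) :
    ContinuousOn (fun t => sSup (g '' Icc a t)) (Icc a b) := by
  intro t₀ ht₀
  rw [Metric.continuousWithinAt_iff]
  intro ε hε
  obtain ⟨δ, hδ, hδ'⟩ := Metric.continuousWithinAt_iff.1 (hg t₀ ht₀) (ε/3) (by linarith)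
  refine ⟨δ, hδ, ?_⟩
  intro t ht hdist
  have key : ∀ u v : ℝ, u ∈ Icc a b → v ∈ Icc a b → u ≤ v → v ∈ Icc a b →
      (∀ w ∈ Icc u v, dist w t₀ < δ) →
      sSup (g '' Icc a v) ≤ sSup (g '' Icc a u) + 2 * (ε/3) := by
    intro u v hu hv huv _ hw
    rw [runSup_split hg hu hv huv]
    rw [max_le_iff]
    constructor
    · linarith [le_refl (sSup (g '' Icc a u))]
    · have h1 : ∀ x ∈ g '' Icc u v, x ≤ g u + 2 * (ε/3) := by
        rintro x ⟨w, hwmem, rfl⟩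
        have hwab : w ∈ Icc a b := ⟨hu.1.trans hwmem.1, hwmem.2.trans hv.2⟩
        have h2 := hδ' hwab (hw w hwmem)
        have h3 := hδ' hu (hw u ⟨le_rfl, huv⟩)
        rw [Real.dist_eq] at h2 h3
        have := abs_lt.1 h2
        have := abs_lt.1 h3
        linarith [(abs_lt.1 h2).1, (abs_lt.1 h2).2, (abs_lt.1 h3).1, (abs_lt.1 h3).2]
      have h4 : g u ≤ sSup (g '' Icc a u) := runSup_ge hg hu
      calc sSup (g '' Icc u v) ≤ g u + 2 * (ε/3) :=
            csSup_le ((nonempty_Icc.2 huv).image g) h1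
        _ ≤ sSup (g '' Icc a u) + 2 * (ε/3) := by linarith
  rw [Real.dist_eq, abs_lt]
  rcases le_total t t₀ with hle | hle
  · have hmono := runSup_mono hg ht ht₀ hle
    have := key t t₀ ht ht₀ hle ht₀ (fun w hw => by
      rw [Real.dist_eq, abs_lt]
      rw [Real.dist_eq, abs_lt] at hdist
      constructor <;> [linarith [hw.1, hdist.1]; linarith [hw.2, hdist.2]])
    constructor <;> linarith
  · have hmono := runSup_mono hg ht₀ ht hle
    have := key t₀ t ht₀ ht hle ht (fun w hw => by
      rw [Real.dist_eq, abs_lt]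
      rw [Real.dist_eq, abs_lt] at hdist
      constructor <;> [linarith [hw.1, hdist.1]; linarith [hw.2, hdist.2]])
    constructor <;> linarith

lemma lower_step (c : ℝ) (s : ℝ → ℝ) (a b : ℝ) (hab : a ≤ b)
    (hs : ContinuousOn s (Icc a b))
    (hosc : ∀ u ∈ Icc a b, ∀ v ∈ Icc a b, s u - s v ≤ c)
    (ℓ₀ u₀ : ℝ) (hz₁ : -c ≤ s a + ℓ₀ - u₀) (hz₂ : s a + ℓ₀ - u₀ ≤ 0) :
    ∃ L U : ℝ → ℝ, L a = ℓ₀ ∧ U a = u₀ ∧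
      ContinuousOn L (Icc a b) ∧ ContinuousOn U (Icc a b) ∧
      MonotoneOn L (Icc a b) ∧ MonotoneOn U (Icc a b) ∧
      (∀ t ∈ Icc a b, s t + L t - U t ∈ Icc (-c) c) ∧
      (∀ t₁ t₂, t₁ ∈ Icc a b → t₂ ∈ Icc a b → t₁ ≤ t₂ →
        (∀ t ∈ Icc t₁ t₂, -c < s t + L t - U t) → L t₁ = L t₂) ∧
      (∀ t₁ t₂ : ℝ, U t₁ = U t₂) := by
  set g : ℝ → ℝ := fun u => u₀ - c - s u with hg_def
  have hgc : ContinuousOn g (Icc a b) := continuousOn_const.sub hs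
  set L : ℝ → ℝ := fun t => max ℓ₀ (sSup (g '' Icc a t)) with hL_def
  set U : ℝ → ℝ := fun _ => u₀ with hU_def
  have ha : a ∈ Icc a b := ⟨le_rfl, hab⟩
  have hLa : L a = ℓ₀ := by
    have : sSup (g '' Icc a a) = g a := by rw [Icc_self, image_singleton, csSup_singleton]
    simp only [hL_def, this]
    have : g a ≤ ℓ₀ := by simp only [hg_def]; linarith
    exact max_eq_left this
  have hLge : ∀ t ∈ Icc a b, g t ≤ L t := fun t ht =>
    (runSup_ge hgc ht).trans (le_max_right _ _)
  have hLmono : MonotoneOn L (Icc a b) := by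
    intro t ht t' ht' h
    exact max_le_max le_rfl (runSup_mono hgc ht ht' h)
  have hLcont : ContinuousOn L (Icc a b) :=
    continuousOn_const.sup (runSup_cont hab hgc)
  refine ⟨L, U, hLa, rfl, hLcont, continuousOn_const, hLmono, monotoneOn_const, ?_, ?_,
    fun _ _ => rfl⟩
  · -- range
    intro t ht
    constructor
    · have := hLge t ht
      simp only [hg_def] at this
      simp only [hU_def]
      linarith
    · simp only [hU_def]
      have h1 : s t + ℓ₀ - u₀ ≤ c := by
        have := hosc t ht a ha
        linarith
      have h2 : s t + sSup (g '' Icc a t) - u₀ ≤ c := by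
        have : sSup (g '' Icc a t) ≤ u₀ - c - s t + c := by
          apply csSup_le ((nonempty_Icc.2 ht.1).image g)
          rintro x ⟨w, hw, rfl⟩
          have hwab : w ∈ Icc a b := ⟨hw.1, hw.2.trans ht.2⟩
          have := hosc t ht w hwab
          simp only [hg_def]
          linarith
        linarith
      simp only [hL_def]
      rcases max_cases ℓ₀ (sSup (g '' Icc a t)) with ⟨h, _⟩ | ⟨h, _⟩ <;> rw [h] <;> linarith
  · -- flat L
    intro t₁ t₂ ht₁ ht₂ h12 hyp
    rcases eq_or_lt_of_le (hLmono ht₁ ht₂ h12) with h | h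
    · exact h
    exfalso
    -- L t₂ = max (L t₁) (sSup (g '' Icc t₁ t₂)), so sSup (g '' Icc t₁ t₂) > L t₁
    have hsplit : L t₂ = max (L t₁) (sSup (g '' Icc t₁ t₂)) := by
      simp only [hL_def]
      rw [runSup_split hgc ht₁ ht₂ h12, max_assoc]
    obtain ⟨u, hu, hmax⟩ := IsCompact.exists_isMaxOn isCompact_Icc (nonempty_Icc.2 h12)
      (hgc.mono (Icc_subset_Icc ht₁.1 ht₂.2))
    have huab : u ∈ Icc a b := ⟨ht₁.1.trans hu.1, hu.2.trans ht₂.2⟩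
    have hS : sSup (g '' Icc t₁ t₂) = g u :=
      le_antisymm (csSup_le ((nonempty_Icc.2 h12).image g)
          (by rintro x ⟨w, hw, rfl⟩; exact hmax hw))
        (le_csSup (IsCompact.bddAbove_image isCompact_Icc
          (hgc.mono (Icc_subset_Icc ht₁.1 ht₂.2))) (mem_image_of_mem g hu))
    have hgt : L t₁ < sSup (g '' Icc t₁ t₂) := by
      by_contra hle
      push_neg at hle
      rw [hsplit, max_eq_left hle] at h
      exact lt_irrefl _ h
    have hLt₂ : L t₂ = g u := by
      rw [hsplit, max_eq_right hgt.le, hS]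
    have hLu : L u = g u :=
      le_antisymm (by rw [← hLt₂]; exact hLmono huab ht₂ hu.2) (hLge u huab)
    have : s u + L u - U u = -c := by simp only [hU_def]; rw [hLu]; simp only [hg_def]; ring
    have := hyp u hu
    linarith

lemma both_step (c : ℝ) (s : ℝ → ℝ) (a b : ℝ) (hab : a ≤ b)
    (hs : ContinuousOn s (Icc a b))
    (hosc : ∀ u ∈ Icc a b, ∀ v ∈ Icc a b, s u - s v ≤ c)
    (ℓ₀ u₀ : ℝ) (hz : s a + ℓ₀ - u₀ ∈ Icc (-c) c) :
    ∃ L U : ℝ → ℝ, L a = ℓ₀ ∧ U a = u₀ ∧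
      ContinuousOn L (Icc a b) ∧ ContinuousOn U (Icc a b) ∧
      MonotoneOn L (Icc a b) ∧ MonotoneOn U (Icc a b) ∧
      (∀ t ∈ Icc a b, s t + L t - U t ∈ Icc (-c) c) ∧
      (∀ t₁ t₂, t₁ ∈ Icc a b → t₂ ∈ Icc a b → t₁ ≤ t₂ →
        (∀ t ∈ Icc t₁ t₂, -c < s t + L t - U t) → L t₁ = L t₂) ∧
      (∀ t₁ t₂, t₁ ∈ Icc a b → t₂ ∈ Icc a b → t₁ ≤ t₂ →
        (∀ t ∈ Icc t₁ t₂, s t + L t - U t < c) → U t₁ = U t₂) := by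
  obtain ⟨hz1, hz2⟩ := hz
  rcases le_total (s a + ℓ₀ - u₀) 0 with hle | hge
  · obtain ⟨L, U, h1, h2, h3, h4, h5, h6, h7, h8, h9⟩ :=
      lower_step c s a b hab hs hosc ℓ₀ u₀ hz1 hle
    exact ⟨L, U, h1, h2, h3, h4, h5, h6, h7, h8, fun t₁ t₂ _ _ _ _ => h9 t₁ t₂⟩
  · obtain ⟨L, U, h1, h2, h3, h4, h5, h6, h7, h8, h9⟩ :=
      lower_step c (fun t => -s t) a b hab hs.neg
        (fun u hu v hv => by have := hosc v hv u hu; show -s u - -s v ≤ c; linarith)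
        u₀ ℓ₀ (by show -c ≤ -s a + u₀ - ℓ₀; linarith) (by show -s a + u₀ - ℓ₀ ≤ 0; linarith)
    refine ⟨U, L, h2, h1, h4, h3, h6, h5, ?_, ?_, ?_⟩
    · intro t ht
      have := h7 t ht
      simp only [mem_Icc] at this ⊢
      constructor <;> linarith [this.1, this.2]
    · intro t₁ t₂ ht₁ ht₂ h12 _
      exact h9 t₁ t₂
    · intro t₁ t₂ ht₁ ht₂ h12 hyp
      refine h8 t₁ t₂ ht₁ ht₂ h12 ?_
      intro t ht
      have := hyp t ht
      linarith

def Sol (c : ℝ) (s L U : ℝ → ℝ) (x : ℝ) : Prop :=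
  L 0 = 0 ∧ U 0 = 0 ∧ ContinuousOn L (Icc 0 x) ∧ ContinuousOn U (Icc 0 x) ∧
  MonotoneOn L (Icc 0 x) ∧ MonotoneOn U (Icc 0 x) ∧
  (∀ t ∈ Icc 0 x, s t + L t - U t ∈ Icc (-c) c) ∧
  (∀ t₁ t₂ : ℝ, 0 ≤ t₁ → t₁ ≤ t₂ → t₂ ≤ x →
    (∀ t ∈ Icc t₁ t₂, -c < s t + L t - U t) → L t₁ = L t₂) ∧
  (∀ t₁ t₂ : ℝ, 0 ≤ t₁ → t₁ ≤ t₂ → t₂ ≤ x →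
    (∀ t ∈ Icc t₁ t₂, s t + L t - U t < c) → U t₁ = U t₂)

lemma glue_mono {f g : ℝ → ℝ} {a b : ℝ} (ha : 0 ≤ a) (hab : a ≤ b)
    (hf : MonotoneOn f (Icc 0 a)) (hg : MonotoneOn g (Icc a b)) :
    MonotoneOn (fun t => f (min t a) + (g (max t a) - g a)) (Icc 0 b) := by
  intro t₁ ht₁ t₂ ht₂ h12
  have m1 : min t₁ a ∈ Icc 0 a := ⟨le_min ht₁.1 ha, min_le_right _ _⟩
  have m2 : min t₂ a ∈ Icc 0 a := ⟨le_min ht₂.1 ha, min_le_right _ _⟩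
  have m3 : max t₁ a ∈ Icc a b := ⟨le_max_right _ _, max_le ht₁.2 hab⟩
  have m4 : max t₂ a ∈ Icc a b := ⟨le_max_right _ _, max_le ht₂.2 hab⟩
  have := hf m1 m2 (min_le_min h12 le_rfl)
  have := hg m3 m4 (max_le_max h12 le_rfl)
  dsimp only
  linarith

lemma glue_cont {f g : ℝ → ℝ} {a b : ℝ} (ha : 0 ≤ a) (hab : a ≤ b)
    (hf : ContinuousOn f (Icc 0 a)) (hg : ContinuousOn g (Icc a b)) :
    ContinuousOn (fun t => f (min t a) + (g (max t a) - g a)) (Icc 0 b) := by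
  apply ContinuousOn.add
  · apply hf.comp (continuous_min.comp (continuous_id.prodMk continuous_const)).continuousOn
    intro t ht
    exact ⟨le_min ht.1 ha, min_le_right _ _⟩
  · apply ContinuousOn.sub _ continuousOn_const
    apply hg.comp (continuous_max.comp (continuous_id.prodMk continuous_const)).continuousOn
    intro t ht
    exact ⟨le_max_right _ _, max_le ht.2 hab⟩

lemma glue_sol (c : ℝ) (s L U Ls Us : ℝ → ℝ) (a b : ℝ) (ha : 0 ≤ a) (hab : a ≤ b)
    (hsol : Sol c s L U a)
    (hLa : Ls a = L a) (hUa : Us a = U a)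
    (hcL : ContinuousOn Ls (Icc a b)) (hcU : ContinuousOn Us (Icc a b))
    (hmL : MonotoneOn Ls (Icc a b)) (hmU : MonotoneOn Us (Icc a b))
    (hrange : ∀ t ∈ Icc a b, s t + Ls t - Us t ∈ Icc (-c) c)
    (hflatL : ∀ t₁ t₂, t₁ ∈ Icc a b → t₂ ∈ Icc a b → t₁ ≤ t₂ →
      (∀ t ∈ Icc t₁ t₂, -c < s t + Ls t - Us t) → Ls t₁ = Ls t₂)
    (hflatU : ∀ t₁ t₂, t₁ ∈ Icc a b → t₂ ∈ Icc a b → t₁ ≤ t₂ →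
      (∀ t ∈ Icc t₁ t₂, s t + Ls t - Us t < c) → Us t₁ = Us t₂) :
    ∃ L' U' : ℝ → ℝ, Sol c s L' U' b ∧ ∀ t, t ≤ a → L' t = L t ∧ U' t = U t := by
  obtain ⟨hL0, hU0, hcL0, hcU0, hmL0, hmU0, hr0, hfL0, hfU0⟩ := hsol
  set L' : ℝ → ℝ := fun t => L (min t a) + (Ls (max t a) - Ls a) with hL'
  set U' : ℝ → ℝ := fun t => U (min t a) + (Us (max t a) - Us a) with hU'
  have hLlow : ∀ t, t ≤ a → L' t = L t := by
    intro t ht; simp only [hL', min_eq_left ht, max_eq_right ht, sub_self, add_zero]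
  have hUlow : ∀ t, t ≤ a → U' t = U t := by
    intro t ht; simp only [hU', min_eq_left ht, max_eq_right ht, sub_self, add_zero]
  have hLhigh : ∀ t, a ≤ t → L' t = Ls t := by
    intro t ht; simp only [hL', min_eq_right ht, max_eq_left ht, hLa]; ring
  have hUhigh : ∀ t, a ≤ t → U' t = Us t := by
    intro t ht; simp only [hU', min_eq_right ht, max_eq_left ht, hUa]; ring
  refine ⟨L', U', ⟨?_, ?_, ?_, ?_, ?_, ?_, ?_, ?_, ?_⟩, fun t ht => ⟨hLlow t ht, hUlow t ht⟩⟩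
  · rw [hLlow 0 ha]; exact hL0
  · rw [hUlow 0 ha]; exact hU0
  · exact glue_cont ha hab hcL0 hcL
  · exact glue_cont ha hab hcU0 hcU
  · exact glue_mono ha hab hmL0 hmL
  · exact glue_mono ha hab hmU0 hmU
  · intro t ht
    rcases le_total t a with h | h
    · rw [hLlow t h, hUlow t h]; exact hr0 t ⟨ht.1, h⟩
    · rw [hLhigh t h, hUhigh t h]; exact hrange t ⟨h, ht.2⟩
  · -- flat L
    intro t₁ t₂ h1 h12 h2b hyp
    have hyp' : ∀ t ∈ Icc t₁ t₂, -c < s t + L' t - U' t := hyp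
    rcases le_total t₂ a with h | h
    · rw [hLlow t₁ (h12.trans h), hLlow t₂ h]
      exact hfL0 t₁ t₂ h1 h12 h (fun t ht => by
        rw [← hLlow t (ht.2.trans h), ← hUlow t (ht.2.trans h)]; exact hyp t ht)
    rcases le_total a t₁ with h' | h'
    · rw [hLhigh t₁ h', hLhigh t₂ (h'.trans h12)]
      exact hflatL t₁ t₂ ⟨h', h12.trans h2b⟩ ⟨h'.trans h12, h2b⟩ h12 (fun t ht => by
        rw [← hLhigh t (h'.trans ht.1), ← hUhigh t (h'.trans ht.1)]; exact hyp t ht)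
    · have e1 : L' t₁ = L' a := by
        rw [hLlow t₁ h', hLlow a le_rfl]
        exact hfL0 t₁ a h1 h' le_rfl (fun t ht => by
          rw [← hLlow t ht.2, ← hUlow t ht.2]; exact hyp t ⟨ht.1, ht.2.trans h⟩)
      have e2 : L' a = L' t₂ := by
        rw [hLhigh a le_rfl, hLhigh t₂ h]
        exact hflatL a t₂ ⟨le_rfl, hab⟩ ⟨h, h2b⟩ h (fun t ht => by
          rw [← hLhigh t ht.1, ← hUhigh t ht.1]; exact hyp t ⟨h'.trans ht.1, ht.2⟩)
      rw [e1, e2]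
  · -- flat U
    intro t₁ t₂ h1 h12 h2b hyp
    rcases le_total t₂ a with h | h
    · rw [hUlow t₁ (h12.trans h), hUlow t₂ h]
      exact hfU0 t₁ t₂ h1 h12 h (fun t ht => by
        rw [← hLlow t (ht.2.trans h), ← hUlow t (ht.2.trans h)]; exact hyp t ht)
    rcases le_total a t₁ with h' | h'
    · rw [hUhigh t₁ h', hUhigh t₂ (h'.trans h12)]
      exact hflatU t₁ t₂ ⟨h', h12.trans h2b⟩ ⟨h'.trans h12, h2b⟩ h12 (fun t ht => by
        rw [← hLhigh t (h'.trans ht.1), ← hUhigh t (h'.trans ht.1)]; exact hyp t ht)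
    · have e1 : U' t₁ = U' a := by
        rw [hUlow t₁ h', hUlow a le_rfl]
        exact hfU0 t₁ a h1 h' le_rfl (fun t ht => by
          rw [← hLlow t ht.2, ← hUlow t ht.2]; exact hyp t ⟨ht.1, ht.2.trans h⟩)
      have e2 : U' a = U' t₂ := by
        rw [hUhigh a le_rfl, hUhigh t₂ h]
        exact hflatU a t₂ ⟨le_rfl, hab⟩ ⟨h, h2b⟩ h (fun t ht => by
          rw [← hLhigh t ht.1, ← hUhigh t ht.1]; exact hyp t ⟨h'.trans ht.1, ht.2⟩)
      rw [e1, e2]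

def Dset (c : ℝ) (s : ℝ → ℝ) (x : ℝ) : Set ℝ :=
  {d | d ≤ 1 ∧ ∀ u ∈ Icc x (x + d), ∀ v ∈ Icc x (x + d), s u - s v ≤ c}

noncomputable def del (c : ℝ) (s : ℝ → ℝ) (x : ℝ) : ℝ := sSup (Dset c s x)

noncomputable def Tt (c : ℝ) (s : ℝ → ℝ) : ℕ → ℝ
  | 0 => 0
  | k + 1 => Tt c s k + del c s (Tt c s k) / 2

lemma Dset_zero_mem {c : ℝ} (hc : 0 < c) (s : ℝ → ℝ) (x : ℝ) : (0:ℝ) ∈ Dset c s x := by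
  refine ⟨zero_le_one, ?_⟩
  intro u hu v hv
  rw [add_zero] at hu hv
  rw [Icc_self, mem_singleton_iff] at hu hv
  rw [hu, hv]; linarith

lemma Dset_bdd (c : ℝ) (s : ℝ → ℝ) (x : ℝ) : BddAbove (Dset c s x) :=
  ⟨1, fun _ hd => hd.1⟩

lemma Dset_dcs {c : ℝ} {s : ℝ → ℝ} {x d d' : ℝ} (hd : d ∈ Dset c s x) (h : d' ≤ d) :
    d' ∈ Dset c s x := by
  refine ⟨h.trans hd.1, fun u hu v hv => hd.2 u ⟨hu.1, hu.2.trans (by linarith)⟩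
    v ⟨hv.1, hv.2.trans (by linarith)⟩⟩

lemma del_pos {c : ℝ} (hc : 0 < c) {s : ℝ → ℝ} (hs : ContinuousOn s (Ici 0))
    {x : ℝ} (hx : 0 ≤ x) : 0 < del c s x := by
  obtain ⟨δ, hδ, hδ'⟩ := Metric.continuousWithinAt_iff.1 (hs x hx) (c/2) (by linarith)
  set d := min (δ/2) 1 with hd
  have hdpos : 0 < d := lt_min (by linarith) one_pos
  have hmem : d ∈ Dset c s x := by
    refine ⟨min_le_right _ _, ?_⟩
    intro u hu v hv
    have hu0 : u ∈ Ici (0:ℝ) := hx.trans hu.1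
    have hv0 : v ∈ Ici (0:ℝ) := hx.trans hv.1
    have hud : dist u x < δ := by
      rw [Real.dist_eq, abs_lt]
      have := hu.1; have := hu.2
      have : d ≤ δ/2 := min_le_left _ _
      constructor <;> [linarith [hu.1]; linarith [hu.2, min_le_left (δ/2) (1:ℝ)]]
    have hvd : dist v x < δ := by
      rw [Real.dist_eq, abs_lt]
      constructor <;> [linarith [hv.1]; linarith [hv.2, min_le_left (δ/2) (1:ℝ)]]
    have h1 := hδ' hu0 hud
    have h2 := hδ' hv0 hvd
    rw [Real.dist_eq, abs_lt] at h1 h2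
    linarith [h1.1, h1.2, h2.1, h2.2]
  exact lt_of_lt_of_le hdpos (le_csSup (Dset_bdd c s x) hmem)

lemma del_half_mem {c : ℝ} (hc : 0 < c) {s : ℝ → ℝ} (hs : ContinuousOn s (Ici 0))
    {x : ℝ} (hx : 0 ≤ x) : del c s x / 2 ∈ Dset c s x := by
  have hpos := del_pos hc hs hx
  have : del c s x / 2 < del c s x := by linarith
  obtain ⟨d, hd, hdgt⟩ := exists_lt_of_lt_csSup ⟨0, Dset_zero_mem hc s x⟩ this
  exact Dset_dcs hd hdgt.le

lemma Tt_nonneg {c : ℝ} (hc : 0 < c) {s : ℝ → ℝ} (hs : ContinuousOn s (Ici 0)) :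
    ∀ k, 0 ≤ Tt c s k ∧ Tt c s k ≤ Tt c s (k + 1) := by
  intro k
  induction k with
  | zero =>
    refine ⟨le_rfl, ?_⟩
    show (0:ℝ) ≤ 0 + del c s 0 / 2
    linarith [del_pos hc hs (le_refl (0:ℝ))]
  | succ n ih =>
    have h1 : 0 ≤ Tt c s (n + 1) := ih.1.trans ih.2
    refine ⟨h1, ?_⟩
    show Tt c s (n+1) ≤ Tt c s (n+1) + del c s (Tt c s (n+1)) / 2
    linarith [del_pos hc hs h1]

lemma Tt_mono {c : ℝ} (hc : 0 < c) {s : ℝ → ℝ} (hs : ContinuousOn s (Ici 0)) :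
    Monotone (Tt c s) :=
  monotone_nat_of_le_succ (fun k => (Tt_nonneg hc hs k).2)

lemma Tt_unbounded {c : ℝ} (hc : 0 < c) {s : ℝ → ℝ} (hs : ContinuousOn s (Ici 0))
    (M : ℝ) : ∃ k, M ≤ Tt c s k := by
  by_contra hcon
  push_neg at hcon
  have hM : 0 < M := lt_of_le_of_lt (Tt_nonneg hc hs 0).1 (hcon 0)
  -- uniform continuity on [0, M+1]
  have hcompact : IsCompact (Icc (0:ℝ) (M+1)) := isCompact_Icc
  have hucont : UniformContinuousOn s (Icc 0 (M+1)) :=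
    hcompact.uniformContinuousOn_of_continuous (hs.mono (fun y hy => hy.1))
  obtain ⟨δ, hδ, hδ'⟩ := Metric.uniformContinuousOn_iff.1 hucont c hc
  set η := min (δ/2) 1 with hη
  have hηpos : 0 < η := lt_min (by linarith) one_pos
  have hstep : ∀ k, η / 2 ≤ del c s (Tt c s k) / 2 := by
    intro k
    have hk0 : 0 ≤ Tt c s k := (Tt_nonneg hc hs k).1
    have hkM : Tt c s k < M := hcon k
    have hmem : η ∈ Dset c s (Tt c s k) := by
      refine ⟨min_le_right _ _, ?_⟩
      intro u hu v hv
      have hsub : Icc (Tt c s k) (Tt c s k + η) ⊆ Icc 0 (M+1) := by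
        intro w hw
        refine ⟨hk0.trans hw.1, hw.2.trans ?_⟩
        have : η ≤ 1 := min_le_right _ _
        linarith
      have hd : dist u v < δ := by
        rw [Real.dist_eq, abs_lt]
        have h1 := hu.1; have h2 := hu.2; have h3 := hv.1; have h4 := hv.2
        have : η ≤ δ/2 := min_le_left _ _
        constructor <;> linarith
      have := hδ' u (hsub hu) v (hsub hv) hd
      rw [Real.dist_eq, abs_lt] at this
      linarith [this.2]
    have h2 : η ≤ del c s (Tt c s k) := le_csSup (Dset_bdd c s (Tt c s k)) hmem
    linarith
  have hgrow : ∀ k : ℕ, (k : ℝ) * (η/2) ≤ Tt c s k := by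
    intro k
    induction k with
    | zero =>
      show ((0:ℕ) : ℝ) * (η/2) ≤ Tt c s 0
      simp [Tt]
    | succ n ih =>
      have : Tt c s (n+1) = Tt c s n + del c s (Tt c s n) / 2 := rfl
      push_cast
      rw [this]
      have := hstep n
      linarith
  obtain ⟨k, hk⟩ := exists_nat_ge (M / (η/2))
  have : M ≤ (k:ℝ) * (η/2) := by
    rw [div_le_iff₀ (by linarith)] at hk
    linarith
  exact absurd (this.trans (hgrow k)) (not_le.2 (hcon k))

/-- **Existence of the two-sided Skorokhod reflection in `[-c, c]`.**
Let `c > 0` and let `s : [0,∞) → ℝ` be continuous with `s 0 ∈ [-c, c]`.  Then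
there exist continuous nondecreasing regulators `L, U` on `[0,∞)` with
`L 0 = U 0 = 0` such that `Z t = s t + L t - U t` stays in `[-c, c]`, `L`
increases only when `Z = -c` and `U` increases only when `Z = c`. -/
theorem skorokhod_reflection_exists
    (c : ℝ) (hc : 0 < c)
    (s : ℝ → ℝ) (hs : ContinuousOn s (Set.Ici 0))
    (hs0 : s 0 ∈ Set.Icc (-c) c) :
    ∃ L U : ℝ → ℝ,
      ContinuousOn L (Set.Ici 0) ∧ ContinuousOn U (Set.Ici 0) ∧
      MonotoneOn L (Set.Ici 0) ∧ MonotoneOn U (Set.Ici 0) ∧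
      L 0 = 0 ∧ U 0 = 0 ∧
      (∀ t ∈ Set.Ici (0 : ℝ), s t + L t - U t ∈ Set.Icc (-c) c) ∧
      (∀ t₁ t₂ : ℝ, 0 ≤ t₁ → t₁ ≤ t₂ →
        (∀ t ∈ Set.Icc t₁ t₂, -c < s t + L t - U t) → L t₁ = L t₂) ∧
      (∀ t₁ t₂ : ℝ, 0 ≤ t₁ → t₁ ≤ t₂ →
        (∀ t ∈ Set.Icc t₁ t₂, s t + L t - U t < c) → U t₁ = U t₂) := by
  set T : ℕ → ℝ := Tt c s with hT
  have hTnn : ∀ k, 0 ≤ T k := fun k => (Tt_nonneg hc hs k).1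
  have hTmono : Monotone T := Tt_mono hc hs
  have hT0 : T 0 = 0 := rfl
  -- one construction step
  have hstep : ∀ (k : ℕ) (p : (ℝ → ℝ) × (ℝ → ℝ)), ∃ q : (ℝ → ℝ) × (ℝ → ℝ),
      Sol c s p.1 p.2 (T k) →
        Sol c s q.1 q.2 (T (k+1)) ∧ ∀ t, t ≤ T k → q.1 t = p.1 t ∧ q.2 t = p.2 t := by
    intro k p
    by_cases hp : Sol c s p.1 p.2 (T k)
    · set a := T k with ha_def
      set b := T (k+1) with hb_def
      have hb : b = a + del c s a / 2 := rfl
      have hab : a ≤ b := by rw [hb]; linarith [del_pos hc hs (hTnn k)]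
      have hsub : Icc a b ⊆ Ici (0:ℝ) := fun y hy => (hTnn k).trans hy.1
      have hosc : ∀ u ∈ Icc a b, ∀ v ∈ Icc a b, s u - s v ≤ c := by
        have := (del_half_mem hc hs (hTnn k)).2
        rw [← hb] at this
        exact this
      have hz : s a + p.1 a - p.2 a ∈ Icc (-c) c :=
        hp.2.2.2.2.2.2.1 a ⟨hTnn k, le_rfl⟩
      obtain ⟨Ls, Us, hLa, hUa, hcLs, hcUs, hmLs, hmUs, hrg, hfL, hfU⟩ :=
        both_step c s a b hab (hs.mono hsub) hosc (p.1 a) (p.2 a) hz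
      obtain ⟨L', U', hsol', hagr⟩ :=
        glue_sol c s p.1 p.2 Ls Us a b (hTnn k) hab hp hLa hUa hcLs hcUs hmLs hmUs hrg hfL hfU
      exact ⟨(L', U'), fun _ => ⟨hsol', hagr⟩⟩
    · exact ⟨p, fun h => absurd h hp⟩
  choose next hnext using hstep
  set F : ℕ → (ℝ → ℝ) × (ℝ → ℝ) :=
    fun k => Nat.rec ((fun _ => 0), (fun _ => 0)) (fun k p => next k p) k with hF
  have hFsucc : ∀ k, F (k+1) = next k (F k) := fun _ => rfl
  have hsolF : ∀ k, Sol c s (F k).1 (F k).2 (T k) := by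
    intro k
    induction k with
    | zero =>
      refine ⟨rfl, rfl, continuousOn_const, continuousOn_const, monotoneOn_const,
        monotoneOn_const, ?_, fun _ _ _ _ _ _ => rfl, fun _ _ _ _ _ _ => rfl⟩
      intro t ht
      rw [hT0] at ht
      have : t = 0 := le_antisymm ht.2 ht.1
      rw [this]
      show s 0 + 0 - 0 ∈ Icc (-c) c
      simpa using hs0
    | succ n ih => exact (hnext n (F n) ih).1
  have hagree : ∀ j k : ℕ, j ≤ k → ∀ t, t ≤ T j →
      (F k).1 t = (F j).1 t ∧ (F k).2 t = (F j).2 t := by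
    intro j k hjk
    induction hjk with
    | refl => exact fun t _ => ⟨rfl, rfl⟩
    | @step m hmn ih =>
      intro t ht
      have h2 := (hnext m (F m) (hsolF m)).2 t (ht.trans (hTmono hmn))
      rw [hFsucc m]
      exact ⟨h2.1.trans (ih t ht).1, h2.2.trans (ih t ht).2⟩
  have hex : ∀ t : ℝ, ∃ k, t ≤ T k := fun t => Tt_unbounded hc hs t
  set L : ℝ → ℝ := fun t => (F (Nat.find (hex t))).1 t with hL
  set U : ℝ → ℝ := fun t => (F (Nat.find (hex t))).2 t with hU
  have hLk : ∀ k t, t ≤ T k → L t = (F k).1 t ∧ U t = (F k).2 t := by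
    intro k t ht
    have hKt : t ≤ T (Nat.find (hex t)) := Nat.find_spec (hex t)
    rcases le_total (Nat.find (hex t)) k with h | h
    · have := hagree (Nat.find (hex t)) k h t hKt
      exact ⟨this.1.symm, this.2.symm⟩
    · exact hagree k (Nat.find (hex t)) h t ht
  have contL : ∀ (G : (ℝ→ℝ)×(ℝ→ℝ) → (ℝ→ℝ)) (W : ℝ → ℝ),
      (∀ k, ContinuousOn (G (F k)) (Icc 0 (T k))) →
      (∀ k t, t ≤ T k → W t = G (F k) t) → ContinuousOn W (Ici 0) := by
    intro G W hcont hWk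
    intro t ht
    obtain ⟨k, hk⟩ := hex (t+1)
    have htk : t < T k := lt_of_lt_of_le (lt_add_one t) hk
    have hWcont : ContinuousOn W (Icc 0 (T k)) :=
      (hcont k).congr (fun x hx => hWk k x hx.2)
    have hW := hWcont t ⟨ht, htk.le⟩
    apply hW.mono_of_mem_nhdsWithin
    rw [mem_nhdsWithin]
    exact ⟨Iio (T k), isOpen_Iio, htk, fun x hx => ⟨hx.2, hx.1.le⟩⟩
  refine ⟨L, U, ?_, ?_, ?_, ?_, ?_, ?_, ?_, ?_, ?_⟩
  · exact contL (fun p => p.1) L (fun k => (hsolF k).2.2.1) (fun k t ht => (hLk k t ht).1)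
  · exact contL (fun p => p.2) U (fun k => (hsolF k).2.2.2.1) (fun k t ht => (hLk k t ht).2)
  · intro t₁ h₁ t₂ h₂ h12
    obtain ⟨k, hk⟩ := hex t₂
    rw [(hLk k t₁ (h12.trans hk)).1, (hLk k t₂ hk).1]
    exact (hsolF k).2.2.2.2.1 ⟨h₁, h12.trans hk⟩ ⟨h₂, hk⟩ h12
  · intro t₁ h₁ t₂ h₂ h12
    obtain ⟨k, hk⟩ := hex t₂
    rw [(hLk k t₁ (h12.trans hk)).2, (hLk k t₂ hk).2]
    exact (hsolF k).2.2.2.2.2.1 ⟨h₁, h12.trans hk⟩ ⟨h₂, hk⟩ h12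
  · rw [(hLk 0 0 hT0.ge).1]; exact (hsolF 0).1
  · rw [(hLk 0 0 hT0.ge).2]; exact (hsolF 0).2.1
  · intro t ht
    obtain ⟨k, hk⟩ := hex t
    rw [(hLk k t hk).1, (hLk k t hk).2]
    exact (hsolF k).2.2.2.2.2.2.1 t ⟨ht, hk⟩
  · intro t₁ t₂ h1 h12 hyp
    obtain ⟨k, hk⟩ := hex t₂
    rw [(hLk k t₁ (h12.trans hk)).1, (hLk k t₂ hk).1]
    refine (hsolF k).2.2.2.2.2.2.2.1 t₁ t₂ h1 h12 hk ?_
    intro t ht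
    rw [← (hLk k t (ht.2.trans hk)).1, ← (hLk k t (ht.2.trans hk)).2]
    exact hyp t ht
  · intro t₁ t₂ h1 h12 hyp
    obtain ⟨k, hk⟩ := hex t₂
    rw [(hLk k t₁ (h12.trans hk)).2, (hLk k t₂ hk).2]
    refine (hsolF k).2.2.2.2.2.2.2.2 t₁ t₂ h1 h12 hk ?_
    intro t ht
    rw [← (hLk k t (ht.2.trans hk)).1, ← (hLk k t (ht.2.trans hk)).2]
    exact hyp t ht
end

section
/- Let c > 0 and let s : [0,∞) → ℝ be continuous with s(0) ∈ [-c, c]. Suppose L, U : [0,∞) → ℝ are continuous nondecreasing functions with L(0) = U(0) = 0 such that Z(t) = s(t) + L(t) - U(t) ∈ [-c, c] for all t, L increases only when Z = -c, and U increases only when Z = c. Then for all t ≥ 0: L(t) = sup_{0 ≤ r ≤ t} max(0, -(c + s(r) - U(r))) and U(t) = sup_{0 ≤ r ≤ t} max(0, -(c - s(r) - L(r))). -/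
open Real Set

/-- Auxiliary lemma: characterization of the upper regulator. -/
lemma skorokhod_aux (c : ℝ) (s L U : ℝ → ℝ)
    (hUc : ContinuousOn U (Set.Ici 0)) (hUm : MonotoneOn U (Set.Ici 0)) (hU0 : U 0 = 0)
    (hZub : ∀ r ∈ Set.Ici (0:ℝ), s r + L r - U r ≤ c)
    (hUflat : ∀ t₁ t₂ : ℝ, 0 ≤ t₁ → t₁ ≤ t₂ →
      (∀ r ∈ Set.Icc t₁ t₂, s r + L r - U r < c) → U t₁ = U t₂)
    (t : ℝ) (ht : 0 ≤ t) :
    U t = sSup ((fun r => max 0 (-(c - s r - L r))) '' Set.Icc 0 t) := by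
  set f : ℝ → ℝ := fun r => max 0 (-(c - s r - L r)) with hf
  have hUnn : ∀ r, 0 ≤ r → 0 ≤ U r := by
    intro r hr
    have := hUm (Set.mem_Ici.mpr le_rfl) (Set.mem_Ici.mpr hr) hr
    linarith [hU0]
  have hub : ∀ x ∈ f '' Set.Icc 0 t, x ≤ U t := by
    rintro _ ⟨r, ⟨hr0, hrt⟩, rfl⟩
    have h1 := hZub r hr0
    have h2 := hUm (Set.mem_Ici.mpr hr0) (Set.mem_Ici.mpr ht) hrt
    have h3 := hUnn r hr0
    have h4 := hUnn t ht
    exact max_le h4 (by linarith)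
  have hbdd : BddAbove (f '' Set.Icc 0 t) := ⟨U t, hub⟩
  have hmem0 : f 0 ∈ f '' Set.Icc 0 t := ⟨0, ⟨le_rfl, ht⟩, rfl⟩
  have hsupnn : 0 ≤ sSup (f '' Set.Icc 0 t) :=
    le_trans (le_max_left _ _) (le_csSup hbdd hmem0)
  refine le_antisymm ?_ (Real.sSup_le hub (hUnn t ht))
  rcases (hUnn t ht).lt_or_eq with hpos | h0
  swap
  · rw [← h0]; exact hsupnn
  -- U t > 0 case
  set T := {r | r ∈ Set.Icc 0 t ∧ U r = U t} with hT
  have htT : t ∈ T := ⟨⟨ht, le_rfl⟩, rfl⟩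
  have hTne : T.Nonempty := ⟨t, htT⟩
  have hTbdd : BddBelow T := ⟨0, fun r hr => hr.1.1⟩
  set τ := sInf T with hτ
  have hτ0 : 0 ≤ τ := le_csInf hTne (fun r hr => hr.1.1)
  have hτt : τ ≤ t := csInf_le hTbdd htT
  have hUτ : U τ = U t := by
    refine le_antisymm (hUm (Set.mem_Ici.mpr hτ0) (Set.mem_Ici.mpr ht) hτt) ?_
    by_contra h
    push_neg at h
    have hcont : ContinuousWithinAt U (Set.Ici 0) τ := hUc τ (Set.mem_Ici.mpr hτ0)
    have hev : ∀ᶠ x in nhdsWithin τ (Set.Ici 0), U x < U t :=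
      Filter.Tendsto.eventually_lt hcont tendsto_const_nhds h
    obtain ⟨δ, hδ, hball⟩ := Metric.mem_nhdsWithin_iff.mp hev
    obtain ⟨r, hrT, hrlt⟩ := exists_lt_of_csInf_lt hTne (show sInf T < τ + δ by linarith)
    have hτr : τ ≤ r := csInf_le hTbdd hrT
    have hdist : dist r τ < δ := by
      rw [Real.dist_eq, abs_of_nonneg (by linarith)]
      linarith
    have := hball ⟨Metric.mem_ball.mpr hdist, Set.mem_Ici.mpr (le_trans hτ0 hτr)⟩
    simp only [Set.mem_setOf_eq, hrT.2] at this
    exact lt_irrefl _ this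
  have hτpos : 0 < τ := by
    rcases hτ0.lt_or_eq with h | h
    · exact h
    · exfalso
      rw [← h, hU0] at hUτ
      linarith
  refine le_of_forall_pos_le_add ?_
  intro ε hε
  have hcont : ContinuousWithinAt U (Set.Ici 0) τ := hUc τ (Set.mem_Ici.mpr hτ0)
  have hev : ∀ᶠ x in nhdsWithin τ (Set.Ici 0), U t - ε < U x :=
    Filter.Tendsto.eventually_lt tendsto_const_nhds hcont (by rw [hUτ]; linarith)
  obtain ⟨δ, hδ, hball⟩ := Metric.mem_nhdsWithin_iff.mp hev
  set t₁ := max 0 (τ - δ/2) with ht₁def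
  have ht₁0 : 0 ≤ t₁ := le_max_left _ _
  have ht₁lt : t₁ < τ := max_lt hτpos (by linarith)
  have ht₁ge : τ - δ/2 ≤ t₁ := le_max_right _ _
  have hdist : dist t₁ τ < δ := by
    rw [Real.dist_eq, abs_of_nonpos (by linarith)]
    linarith
  have hUt₁ : U t - ε < U t₁ := hball ⟨Metric.mem_ball.mpr hdist, Set.mem_Ici.mpr ht₁0⟩
  by_cases hex : ∃ u ∈ Set.Icc t₁ τ, s u + L u - U u = c
  · obtain ⟨u, ⟨hu1, hu2⟩, hZu⟩ := hex
    have hu0 : 0 ≤ u := le_trans ht₁0 hu1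
    have hut : u ≤ t := le_trans hu2 hτt
    have hval : f u = U u := by
      have h1 : -(c - s u - L u) = U u := by linarith
      rw [hf]
      simp only
      rw [h1, max_eq_right (hUnn u hu0)]
    have hle : f u ≤ sSup (f '' Set.Icc 0 t) := le_csSup hbdd ⟨u, ⟨hu0, hut⟩, rfl⟩
    have hmono : U t₁ ≤ U u := hUm (Set.mem_Ici.mpr ht₁0) (Set.mem_Ici.mpr hu0) hu1
    rw [hval] at hle
    linarith
  · exfalso
    push_neg at hex
    have hflat := hUflat t₁ τ ht₁0 ht₁lt.le
      (fun r hr => lt_of_le_of_ne (hZub r (Set.mem_Ici.mpr (le_trans ht₁0 hr.1))) (hex r hr))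
    have ht₁T : t₁ ∈ T := ⟨⟨ht₁0, le_trans ht₁lt.le hτt⟩, by rw [hflat, hUτ]⟩
    exact absurd (csInf_le hTbdd ht₁T) (not_le.mpr ht₁lt)

/-- **Characterization of the regulators of the two-sided Skorokhod reflection.**
Let `c > 0` and `s : [0,∞) → ℝ` continuous with `s 0 ∈ [-c, c]`.  If `L, U` are
continuous nondecreasing regulators vanishing at `0` such that
`Z t = s t + L t - U t ∈ [-c, c]`, `L` increases only when `Z = -c`, and `U`
increases only when `Z = c`, then for all `t ≥ 0`:
`L t = sup_{0 ≤ r ≤ t} (0 ⊔ -(c + s r - U r))` and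
`U t = sup_{0 ≤ r ≤ t} (0 ⊔ -(c - s r - L r))`. -/
theorem skorokhod_regulators_sup_formula
    (c : ℝ) (hc : 0 < c)
    (s : ℝ → ℝ) (hs : ContinuousOn s (Set.Ici 0))
    (hs0 : s 0 ∈ Set.Icc (-c) c)
    (L U : ℝ → ℝ)
    (hLc : ContinuousOn L (Set.Ici 0)) (hUc : ContinuousOn U (Set.Ici 0))
    (hLm : MonotoneOn L (Set.Ici 0)) (hUm : MonotoneOn U (Set.Ici 0))
    (hL0 : L 0 = 0) (hU0 : U 0 = 0)
    (hZ : ∀ t ∈ Set.Ici (0 : ℝ), s t + L t - U t ∈ Set.Icc (-c) c)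
    (hLflat : ∀ t₁ t₂ : ℝ, 0 ≤ t₁ → t₁ ≤ t₂ →
      (∀ t ∈ Set.Icc t₁ t₂, -c < s t + L t - U t) → L t₁ = L t₂)
    (hUflat : ∀ t₁ t₂ : ℝ, 0 ≤ t₁ → t₁ ≤ t₂ →
      (∀ t ∈ Set.Icc t₁ t₂, s t + L t - U t < c) → U t₁ = U t₂) :
    ∀ t : ℝ, 0 ≤ t →
      L t = sSup ((fun r => max 0 (-(c + s r - U r))) '' Set.Icc 0 t) ∧
      U t = sSup ((fun r => max 0 (-(c - s r - L r))) '' Set.Icc 0 t) := by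
  intro t ht
  constructor
  · have h := skorokhod_aux c (fun r => -(s r)) U L hLc hLm hL0
      (fun r hr => by have := (hZ r hr).1; linarith)
      (fun t₁ t₂ h1 h2 h3 => hLflat t₁ t₂ h1 h2
        (fun r hr => by have := h3 r hr; linarith))
      t ht
    rw [h]
    congr 1
    ext x
    constructor
    · rintro ⟨r, hr, rfl⟩
      exact ⟨r, hr, by congr 1; ring⟩
    · rintro ⟨r, hr, rfl⟩
      exact ⟨r, hr, by congr 1; ring⟩
  · exact skorokhod_aux c s L U hUc hUm hU0 (fun r hr => (hZ r hr).2) hUflat t ht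
end

section
/- Let γ ∈ (0,1), w ∈ (0,1), and θ ≠ 0 with γ^{2θ} ≠ 1. Define g(w, θ) = θ·( (1-γ)/(1 - w + γw) · γ^{2θ}/(1 - γ^{2θ}) + (1-γ)/(γ(1-w) + w) · 1/(1 - γ^{2θ}) ). Then g(w, -θ) = g(1 - w, θ). In particular the growth-rate ratio of a G3M is symmetric under simultaneously reversing the sign of the normalized drift θ = 2μ/σ² and swapping the weight w with 1 - w. -/
open Real Set

/-- **Symmetry of the G3M growth-rate ratio.**
Let `γ ∈ (0,1)`, `w ∈ (0,1)`, `θ ≠ 0` with `γ^{2θ} ≠ 1`, and define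
`g(w,θ) = θ ((1-γ)/(1-w+γw) · γ^{2θ}/(1-γ^{2θ}) + (1-γ)/(γ(1-w)+w) · 1/(1-γ^{2θ}))`.
Then `g(w,-θ) = g(1-w,θ)`: the growth-rate ratio is symmetric under
simultaneously reversing the sign of the normalized drift `θ` and swapping the
weight `w` with `1-w`. -/
theorem g3m_growth_ratio_symmetry
    (γ w θ : ℝ) (hγ : γ ∈ Set.Ioo (0 : ℝ) 1) (hw : w ∈ Set.Ioo (0 : ℝ) 1)
    (hθ : θ ≠ 0) (h1 : γ ^ (2 * θ) ≠ 1)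
    (g : ℝ → ℝ → ℝ)
    (hg : ∀ w' θ' : ℝ, g w' θ'
      = θ' * ((1 - γ) / (1 - w' + γ * w') * (γ ^ (2 * θ') / (1 - γ ^ (2 * θ')))
        + (1 - γ) / (γ * (1 - w') + w') * (1 / (1 - γ ^ (2 * θ'))))) :
    g w (-θ) = g (1 - w) θ := by
  obtain ⟨hγ0, hγ1⟩ := hγ
  obtain ⟨hw0, hw1⟩ := hw
  rw [hg, hg]
  have hxpos : 0 < γ ^ (2 * θ) := Real.rpow_pos_of_pos hγ0 _
  have hneg : γ ^ (2 * -θ) = (γ ^ (2 * θ))⁻¹ := by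
    rw [show 2 * -θ = -(2 * θ) by ring, Real.rpow_neg hγ0.le]
  set x := γ ^ (2 * θ) with hxdef
  rw [hneg]
  have hx0 : x ≠ 0 := ne_of_gt hxpos
  have h1x : 1 - x ≠ 0 := sub_ne_zero.mpr (Ne.symm h1)
  have h1xi : 1 - x⁻¹ ≠ 0 := by
    intro h
    apply h1
    have : x⁻¹ = 1 := by linarith
    field_simp at this
    exact this.symm
  have hd1 : 1 - w + γ * w ≠ 0 := by nlinarith
  have hd2 : γ * (1 - w) + w ≠ 0 := by nlinarith
  have hd3 : 1 - (1 - w) + γ * (1 - w) ≠ 0 := by nlinarith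
  have hd4 : γ * (1 - (1 - w)) + (1 - w) ≠ 0 := by nlinarith
  field_simp
  have key : ∀ a A : ℝ, a / (A * (x - 1)) = -(a / (A * (1 - x))) := by
    intro a A; rw [show x - 1 = -(1 - x) by ring, mul_neg, div_neg]
  ring
end

section
/- Let c > 0, t_0 ∈ ℝ, C > 0. Let q, ḡ, f̄ ∈ L²([-c,c]) with q ≥ 0, and let p : (t_0, ∞) × [-c, c] → [0, ∞) and f : (t_0, ∞) × [-c, c] → ℝ be jointly measurable functions such that p(s,·), f(s,·) ∈ L²([-c,c]) for each s > t_0, ‖p(s,·) - q‖_{L²} ≤ C/√(s - t_0) for all s > t_0, ‖f(s,·) - f̄‖_{L²} → 0 as s → ∞, and sup_{t_0 < s ≤ T} ‖f(s,·)‖_{L²} < ∞ for every T > t_0. Then lim_{T → ∞} (1/(T - t_0)) · ( ∫_{-c}^{c} ḡ(y)·p(T,y) dy + ∫_{t_0}^{T} ∫_{-c}^{c} f(s,y)·p(s,y) dy ds ) = ∫_{-c}^{c} f̄(y)·q(y) dy. -/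
open Real Set Filter MeasureTheory Topology
open scoped ENNReal

section Helpers

variable {α : Type*} [MeasurableSpace α] {μ : Measure α}

/-- The product of two L² functions is integrable. -/
lemma l2_integrable_mul {u v : α → ℝ} (hu : MemLp u 2 μ) (hv : MemLp v 2 μ) :
    Integrable (fun a => u a * v a) μ := by
  have h := L2.integrable_inner (𝕜 := ℝ) (hu.toLp u) (hv.toLp v)
  refine h.congr ?_
  filter_upwards [hu.coeFn_toLp, hv.coeFn_toLp] with a ha hb
  simp [RCLike.inner_apply, ha, hb, mul_comm]

/-- Cauchy–Schwarz for integrals of products of L² functions. -/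
lemma l2_cauchy_schwarz {u v : α → ℝ} (hu : MemLp u 2 μ) (hv : MemLp v 2 μ) :
    |∫ a, u a * v a ∂μ| ≤ (eLpNorm u 2 μ).toReal * (eLpNorm v 2 μ).toReal := by
  have h1 : ∫ a, u a * v a ∂μ = inner (𝕜 := ℝ) (hu.toLp u) (hv.toLp v) := by
    rw [L2.inner_def]
    refine (integral_congr_ae ?_).symm
    filter_upwards [hu.coeFn_toLp, hv.coeFn_toLp] with a ha hb
    simp [RCLike.inner_apply, ha, hb, mul_comm]
  rw [h1, ← Lp.norm_toLp u hu, ← Lp.norm_toLp v hv]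
  exact abs_real_inner_le_norm _ _

/-- Cesàro-type averaging for integrals: if `G → 0` at `atTop`, then its average
over `(t₀, T]` tends to `0`. -/
lemma cesaro_integral_zero {t₀ : ℝ} {G : ℝ → ℝ}
    (hint : ∀ T, t₀ < T → IntegrableOn G (Set.Ioc t₀ T) volume)
    (hlim : Tendsto G atTop (𝓝 0)) :
    Tendsto (fun T => (1 / (T - t₀)) * ∫ s in Set.Ioc t₀ T, G s) atTop (𝓝 0) := by
  rw [Metric.tendsto_nhds]
  intro ε hε
  have hε2 : 0 < ε / 2 := by positivity
  obtain ⟨a, ha⟩ := eventually_atTop.1 (Metric.tendsto_nhds.1 hlim (ε / 2) hε2)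
  set T₁ : ℝ := max a (t₀ + 1) with hT₁def
  have hT₁t₀ : t₀ < T₁ := lt_of_lt_of_le (by linarith) (le_max_right _ _)
  set A : ℝ := |∫ s in Set.Ioc t₀ T₁, G s| with hAdef
  have hsub : Tendsto (fun T : ℝ => T - t₀) atTop atTop :=
    (tendsto_atTop_add_const_right atTop (-t₀) tendsto_id).congr
      (fun x => (sub_eq_add_neg x t₀).symm)
  have hA : Tendsto (fun T => A / (T - t₀)) atTop (𝓝 0) :=
    Tendsto.div_atTop tendsto_const_nhds hsub
  have hAsmall := Metric.tendsto_nhds.1 hA (ε / 2) hε2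
  filter_upwards [eventually_ge_atTop T₁, hAsmall, eventually_gt_atTop t₀]
    with T hTT₁ hAT hTt₀
  have hne : T - t₀ ≠ 0 := ne_of_gt (by linarith)
  have hT₁T : t₀ < T := hTt₀
  -- split the integral
  have hint2 : IntegrableOn G (Set.Ioc T₁ T) volume :=
    (hint T hT₁T).mono_set (Set.Ioc_subset_Ioc_left hT₁t₀.le)
  have hsplit : ∫ s in Set.Ioc t₀ T, G s
      = (∫ s in Set.Ioc t₀ T₁, G s) + ∫ s in Set.Ioc T₁ T, G s := by
    rw [← Set.Ioc_union_Ioc_eq_Ioc hT₁t₀.le hTT₁,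
      setIntegral_union (Set.Ioc_disjoint_Ioc_of_le le_rfl) measurableSet_Ioc
        (hint T₁ hT₁t₀) hint2]
  -- middle bound
  have hmid : |∫ s in Set.Ioc T₁ T, G s| ≤ ε / 2 * (T - T₁) := by
    have hb := norm_setIntegral_le_of_norm_le_const (μ := volume)
      (s := Set.Ioc T₁ T) (f := G) (C := ε / 2)
      (by rw [Real.volume_Ioc]; exact ENNReal.ofReal_lt_top)
      (fun x hx => by
        have hx1 : a ≤ x := le_trans (le_max_left _ _) hx.1.le
        have := ha x hx1
        rw [Real.dist_eq, sub_zero] at this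
        simpa [Real.norm_eq_abs] using this.le)
    rwa [Real.volume_real_Ioc, max_eq_left (by linarith), Real.norm_eq_abs] at hb
  -- conclude
  rw [Real.dist_eq, sub_zero]
  have hpos : 0 < T - t₀ := by linarith
  have habs : |(1 / (T - t₀)) * ∫ s in Set.Ioc t₀ T, G s|
      = (1 / (T - t₀)) * |∫ s in Set.Ioc t₀ T, G s| := by
    rw [abs_mul, abs_of_pos (by positivity : (0:ℝ) < 1 / (T - t₀))]
  rw [habs, hsplit]
  have h1 : |(∫ s in Set.Ioc t₀ T₁, G s) + ∫ s in Set.Ioc T₁ T, G s|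
      ≤ A + ε / 2 * (T - t₀) := by
    refine (abs_add_le _ _).trans (add_le_add le_rfl (hmid.trans ?_))
    have : T - T₁ ≤ T - t₀ := by linarith
    nlinarith
  have h3 : (1 / (T - t₀)) * (A + ε / 2 * (T - t₀)) = A / (T - t₀) + ε / 2 := by
    field_simp
  have h4 : A / (T - t₀) < ε / 2 := by
    have := hAT
    rw [Real.dist_eq, sub_zero] at this
    calc A / (T - t₀) ≤ |A / (T - t₀)| := le_abs_self _
      _ < ε / 2 := this
  calc (1 / (T - t₀)) * |(∫ s in Set.Ioc t₀ T₁, G s) + ∫ s in Set.Ioc T₁ T, G s|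
      ≤ (1 / (T - t₀)) * (A + ε / 2 * (T - t₀)) :=
        mul_le_mul_of_nonneg_left h1 (by positivity)
    _ = A / (T - t₀) + ε / 2 := h3
    _ < ε / 2 + ε / 2 := by linarith
    _ = ε := by ring

end Helpers

/-- **Long-term time-averaged limit for time-inhomogeneous reflected diffusions
(analytic core of Theorem `time-inhomo-lim`).**
Let `c > 0`, `t₀ ∈ ℝ`, `C > 0`.  Let `q`, `g`, `fbar ∈ L²([-c,c])` with `q ≥ 0`,
and let `p ≥ 0` and `f` be jointly measurable on `(t₀,∞) × [-c,c]` with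
`p(s,·), f(s,·) ∈ L²` for each `s > t₀`, the ergodicity bound
`‖p(s,·) - q‖₂ ≤ C/√(s - t₀)`, `‖f(s,·) - fbar‖₂ → 0` as `s → ∞`, and
`sup_{t₀ < s ≤ T} ‖f(s,·)‖₂ < ∞` for every `T > t₀`.  Then
`(1/(T-t₀)) (∫ g(y) p(T,y) dy + ∫_{t₀}^T ∫ f(s,y) p(s,y) dy ds) → ∫ fbar q`
as `T → ∞`. -/
theorem time_inhomogeneous_time_average_limit
    (c t₀ C : ℝ) (hc : 0 < c) (hC : 0 < C)
    (q g fbar : ℝ → ℝ)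
    (p f : ℝ → ℝ → ℝ)
    (μc : Measure ℝ) (hμc : μc = volume.restrict (Set.Icc (-c) c))
    (hq2 : MemLp q 2 μc) (hg2 : MemLp g 2 μc) (hfbar2 : MemLp fbar 2 μc)
    (hqpos : ∀ y, 0 ≤ q y)
    (hppos : ∀ s y, 0 ≤ p s y)
    (hpmeas : Measurable (Function.uncurry p))
    (hfmeas : Measurable (Function.uncurry f))
    (hp2 : ∀ s, t₀ < s → MemLp (p s) 2 μc)
    (hf2 : ∀ s, t₀ < s → MemLp (f s) 2 μc)
    (hergodic : ∀ s, t₀ < s →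
      eLpNorm (fun y => p s y - q y) 2 μc ≤ ENNReal.ofReal (C / Real.sqrt (s - t₀)))
    (hfconv : Tendsto (fun s => eLpNorm (fun y => f s y - fbar y) 2 μc)
      atTop (nhds 0))
    (hfbdd : ∀ T, t₀ < T → ∃ M : ℝ,
      ∀ s, t₀ < s → s ≤ T → eLpNorm (f s) 2 μc ≤ ENNReal.ofReal M) :
    Tendsto (fun T =>
        (1 / (T - t₀)) * ((∫ y in Set.Icc (-c) c, g y * p T y)
          + ∫ s in Set.Ioc t₀ T, ∫ y in Set.Icc (-c) c, f s y * p s y))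
      atTop (nhds (∫ y in Set.Icc (-c) c, fbar y * q y)) := by
  subst hμc
  set μ : Measure ℝ := volume.restrict (Set.Icc (-c) c) with hμdef
  -- notation
  set F : ℝ → ℝ := fun s => ∫ y, f s y * p s y ∂μ with hFdef
  set L : ℝ := ∫ y, fbar y * q y ∂μ with hLdef
  set rq : ℝ := (eLpNorm q 2 μ).toReal with hrqdef
  set rg : ℝ := (eLpNorm g 2 μ).toReal with hrgdef
  set rfbar : ℝ := (eLpNorm fbar 2 μ).toReal with hrfbardef
  have hsub : Tendsto (fun T : ℝ => T - t₀) atTop atTop :=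
    (tendsto_atTop_add_const_right atTop (-t₀) tendsto_id).congr
      (fun x => (sub_eq_add_neg x t₀).symm)
  have hsqrt : Tendsto (fun s : ℝ => Real.sqrt (s - t₀)) atTop atTop :=
    (((tendsto_rpow_atTop (by norm_num : (0:ℝ) < 1/2)).comp hsub).congr
      (fun x => (Real.sqrt_eq_rpow (x - t₀)).symm))
  have hCsqrt : Tendsto (fun s : ℝ => C / Real.sqrt (s - t₀)) atTop (𝓝 0) :=
    Tendsto.div_atTop tendsto_const_nhds hsqrt
  have hCsmall : ∀ s : ℝ, t₀ + 1 ≤ s → C / Real.sqrt (s - t₀) ≤ C := by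
    intro s hs
    have h1 : (1:ℝ) ≤ Real.sqrt (s - t₀) := by
      rw [show (1:ℝ) = Real.sqrt 1 by simp]
      exact Real.sqrt_le_sqrt (by linarith)
    exact div_le_self hC.le h1
  -- norm bound on p s
  have hpbound : ∀ s, t₀ < s →
      (eLpNorm (p s) 2 μ).toReal ≤ rq + C / Real.sqrt (s - t₀) := by
    intro s hs
    have h0 : (0:ℝ) ≤ C / Real.sqrt (s - t₀) := by positivity
    have h1 : eLpNorm (p s) 2 μ ≤ eLpNorm (fun y => p s y - q y) 2 μ + eLpNorm q 2 μ := by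
      have h := eLpNorm_add_le (((hp2 s hs).sub hq2).aestronglyMeasurable)
        hq2.aestronglyMeasurable (one_le_two : (1:ℝ≥0∞) ≤ 2)
      have he : p s - q + q = p s := by funext y; simp
      rw [he] at h
      exact h
    have h2 : eLpNorm (p s) 2 μ ≤ ENNReal.ofReal (C / Real.sqrt (s - t₀)) + eLpNorm q 2 μ :=
      h1.trans (add_le_add (hergodic s hs) le_rfl)
    have h3 : (ENNReal.ofReal (C / Real.sqrt (s - t₀)) + eLpNorm q 2 μ) ≠ ⊤ :=
      ENNReal.add_ne_top.2 ⟨ENNReal.ofReal_ne_top, hq2.eLpNorm_ne_top⟩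
    have h4 := ENNReal.toReal_mono h3 h2
    rwa [ENNReal.toReal_add ENNReal.ofReal_ne_top hq2.eLpNorm_ne_top,
      ENNReal.toReal_ofReal h0, add_comm] at h4
  -- boundary term tends to zero
  have hbdry : Tendsto (fun T => (1 / (T - t₀)) * ∫ y, g y * p T y ∂μ) atTop (𝓝 0) := by
    refine squeeze_zero_norm' (a := fun T => (rg * (rq + C)) / (T - t₀)) ?_
      (Tendsto.div_atTop tendsto_const_nhds hsub)
    filter_upwards [eventually_ge_atTop (t₀ + 1)] with T hT
    have hTt₀ : t₀ < T := by linarith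
    have h1 : |∫ y, g y * p T y ∂μ| ≤ rg * (rq + C) := by
      refine (l2_cauchy_schwarz hg2 (hp2 T hTt₀)).trans ?_
      refine mul_le_mul_of_nonneg_left ?_ ENNReal.toReal_nonneg
      exact (hpbound T hTt₀).trans (by linarith [hCsmall T hT])
    have hpos : (0:ℝ) < T - t₀ := by linarith
    rw [Real.norm_eq_abs, abs_mul, abs_of_pos (by positivity : (0:ℝ) < 1 / (T - t₀))]
    calc 1 / (T - t₀) * |∫ y, g y * p T y ∂μ|
        ≤ 1 / (T - t₀) * (rg * (rq + C)) := mul_le_mul_of_nonneg_left h1 (by positivity)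
      _ = rg * (rq + C) / (T - t₀) := by ring
  -- difference decomposition
  have hFdiff : ∀ s, t₀ < s → F s - L
      = (∫ y, (f s y - fbar y) * p s y ∂μ) + ∫ y, fbar y * (p s y - q y) ∂μ := by
    intro s hs
    have i1 : Integrable (fun y => f s y * p s y) μ := l2_integrable_mul (hf2 s hs) (hp2 s hs)
    have i2 : Integrable (fun y => fbar y * p s y) μ := l2_integrable_mul hfbar2 (hp2 s hs)
    have i3 : Integrable (fun y => fbar y * q y) μ := l2_integrable_mul hfbar2 hq2
    have e1 : ∫ y, (f s y - fbar y) * p s y ∂μ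
        = (∫ y, f s y * p s y ∂μ) - ∫ y, fbar y * p s y ∂μ := by
      rw [← integral_sub i1 i2]
      exact integral_congr_ae (Eventually.of_forall fun y => by ring)
    have e2 : ∫ y, fbar y * (p s y - q y) ∂μ
        = (∫ y, fbar y * p s y ∂μ) - ∫ y, fbar y * q y ∂μ := by
      rw [← integral_sub i2 i3]
      exact integral_congr_ae (Eventually.of_forall fun y => by ring)
    rw [e1, e2]
    simp only [hFdef, hLdef]
    ring
  -- pointwise bound on |F s - L|
  have hFbound : ∀ s, t₀ < s → |F s - L|
      ≤ (eLpNorm (fun y => f s y - fbar y) 2 μ).toReal * (rq + C / Real.sqrt (s - t₀))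
        + rfbar * (C / Real.sqrt (s - t₀)) := by
    intro s hs
    rw [hFdiff s hs]
    refine (abs_add_le _ _).trans (add_le_add ?_ ?_)
    · exact (l2_cauchy_schwarz ((hf2 s hs).sub hfbar2) (hp2 s hs)).trans
        (mul_le_mul_of_nonneg_left (hpbound s hs) ENNReal.toReal_nonneg)
    · refine (l2_cauchy_schwarz hfbar2 ((hp2 s hs).sub hq2)).trans
        (mul_le_mul_of_nonneg_left ?_ ENNReal.toReal_nonneg)
      have h2 := ENNReal.toReal_mono ENNReal.ofReal_ne_top (hergodic s hs)
      rwa [ENNReal.toReal_ofReal (by positivity)] at h2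
  -- F tends to L
  have hnd : Tendsto (fun s => (eLpNorm (fun y => f s y - fbar y) 2 μ).toReal)
      atTop (𝓝 0) := by
    have := (ENNReal.tendsto_toReal (ENNReal.zero_ne_top)).comp hfconv
    simpa [Function.comp_def] using this
  have hFlim : Tendsto F atTop (𝓝 L) := by
    rw [← tendsto_sub_nhds_zero_iff]
    refine squeeze_zero_norm'
      (a := fun s => (eLpNorm (fun y => f s y - fbar y) 2 μ).toReal * (rq + C)
        + rfbar * (C / Real.sqrt (s - t₀))) ?_ ?_
    · filter_upwards [eventually_ge_atTop (t₀ + 1)] with s hs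
      have hst₀ : t₀ < s := by linarith
      rw [Real.norm_eq_abs]
      refine (hFbound s hst₀).trans (add_le_add ?_ le_rfl)
      refine mul_le_mul_of_nonneg_left ?_ ENNReal.toReal_nonneg
      linarith [hCsmall s hs]
    · have h1 := (hnd.mul_const (rq + C)).add (hCsqrt.const_mul rfbar)
      simpa using h1
  -- integrability of F on Ioc t₀ T
  have hFmeas : StronglyMeasurable F := by
    have hm : StronglyMeasurable (fun sy : ℝ × ℝ => f sy.1 sy.2 * p sy.1 sy.2) :=
      (hfmeas.mul hpmeas).stronglyMeasurable
    exact hm.integral_prod_right'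
  have hFint : ∀ T, t₀ < T → IntegrableOn F (Set.Ioc t₀ T) volume := by
    intro T hT
    obtain ⟨M, hM⟩ := hfbdd T hT
    set M' : ℝ := max M 0 with hM'def
    have hM'0 : (0:ℝ) ≤ M' := le_max_right _ _
    have hMn : ∀ s, t₀ < s → s ≤ T → (eLpNorm (f s) 2 μ).toReal ≤ M' := by
      intro s h1 h2
      have h3 := ENNReal.toReal_mono ENNReal.ofReal_ne_top
        ((hM s h1 h2).trans (ENNReal.ofReal_le_ofReal (le_max_left M 0)))
      rwa [ENNReal.toReal_ofReal hM'0] at h3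
    -- dominating function
    have hrpow : IntegrableOn (fun s => (s - t₀) ^ (-(1/2) : ℝ)) (Set.Ioc t₀ T) volume := by
      have h1 := intervalIntegral.intervalIntegrable_rpow'
        (a := 0) (b := T - t₀) (r := -(1/2)) (by norm_num)
      have h2 := h1.comp_sub_right t₀
      simp only [zero_add, sub_add_cancel] at h2
      exact (intervalIntegrable_iff_integrableOn_Ioc_of_le hT.le).1 h2
    have hdom : IntegrableOn
        (fun s => M' * (rq + C / Real.sqrt (s - t₀))) (Set.Ioc t₀ T) volume := by
      refine Integrable.const_mul ?_ M'
      refine Integrable.add (integrableOn_const ?_) ?_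
      · rw [Real.volume_Ioc]; exact ENNReal.ofReal_ne_top
      · refine (IntegrableOn.congr_fun (hrpow.const_mul C) ?_ measurableSet_Ioc)
        intro s hs
        have h0 : (0:ℝ) < s - t₀ := sub_pos.2 hs.1
        show C * (s - t₀) ^ (-(1/2) : ℝ) = C / Real.sqrt (s - t₀)
        rw [Real.rpow_neg h0.le, ← Real.sqrt_eq_rpow, div_eq_mul_inv]
    refine hdom.mono' (hFmeas.aestronglyMeasurable.restrict) ?_
    refine (ae_restrict_iff' measurableSet_Ioc).2 (Eventually.of_forall fun s hs => ?_)
    have hst₀ : t₀ < s := hs.1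
    have h1 := l2_cauchy_schwarz (hf2 s hst₀) (hp2 s hst₀)
    rw [Real.norm_eq_abs]
    calc |F s| ≤ (eLpNorm (f s) 2 μ).toReal * (eLpNorm (p s) 2 μ).toReal := h1
      _ ≤ M' * (rq + C / Real.sqrt (s - t₀)) := by
          refine mul_le_mul (hMn s hst₀ hs.2) (hpbound s hst₀)
            ENNReal.toReal_nonneg hM'0
  -- Cesàro average of F tends to L
  have hGint : ∀ T, t₀ < T → IntegrableOn (fun s => F s - L) (Set.Ioc t₀ T) volume := by
    intro T hT
    exact (hFint T hT).sub (integrableOn_const (by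
      rw [Real.volume_Ioc]; exact ENNReal.ofReal_ne_top))
  have hGlim : Tendsto (fun s => F s - L) atTop (𝓝 0) :=
    tendsto_sub_nhds_zero_iff.2 hFlim
  have hces := cesaro_integral_zero hGint hGlim
  have havg : Tendsto (fun T => (1 / (T - t₀)) * ∫ s in Set.Ioc t₀ T, F s)
      atTop (𝓝 L) := by
    have h1 := hces.add (tendsto_const_nhds : Tendsto (fun _ : ℝ => L) atTop (𝓝 L))
    rw [zero_add] at h1
    refine h1.congr' ?_
    filter_upwards [eventually_gt_atTop t₀] with T hT
    have hne : T - t₀ ≠ 0 := ne_of_gt (by linarith)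
    have e1 : ∫ s in Set.Ioc t₀ T, (F s - L)
        = (∫ s in Set.Ioc t₀ T, F s) - L * (T - t₀) := by
      rw [integral_sub (hFint T hT) (integrableOn_const (by
        rw [Real.volume_Ioc]; exact ENNReal.ofReal_ne_top))]
      rw [setIntegral_const, Real.volume_real_Ioc,
        max_eq_left (by linarith : (0:ℝ) ≤ T - t₀), smul_eq_mul]
      ring
    rw [e1]
    field_simp
    ring
  -- conclusion
  have hfinal := hbdry.add havg
  rw [zero_add] at hfinal
  refine hfinal.congr fun T => by ring
end
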